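/- arXiv:math/0610014 — 9 statements merged into one kernel-verified Lean document; each statement's English description precedes it below -/
import Mathlib

section
/- (Variation of Mumford's quotients, combinatorial form.) For any two strictly dominant vectors χ₁, χ₂ ∈ C⁰: W^{st}_{χ₁} = W^{st}_{χ₂} if and only if {w ∈ W : χ₁ ∈ wA} = {w ∈ W : χ₂ ∈ wA}. In other words, two strictly dominant weights are GIT-equivalent (give the same set of semistable Weyl group elements) exactly when they lie in the same cones of the finite family {wA : w ∈ W}. -/
open InnerProductSpace

/-- The Weyl group of a root system `Δ` in a real inner product space: the subgroup of
linear isometries generated by the reflections `s_α : x ↦ x - (2(x,α)/(α,α))·α`, `α ∈ Δ`. -/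
def weylGroup {E : Type*} [NormedAddCommGroup E] [InnerProductSpace ℝ E]
    (Δ : Finset E) : Subgroup (E ≃ₗᵢ[ℝ] E) :=
  Subgroup.closure
    {u : E ≃ₗᵢ[ℝ] E | ∃ α ∈ Δ, ∀ x : E, u x = x - (2 * ⟪x, α⟫_ℝ / ⟪α, α⟫_ℝ) • α}

section Aux

variable {E : Type*} [NormedAddCommGroup E] [InnerProductSpace ℝ E]

lemma weylGroup_maps (Δ : Finset E)
    (hrefl : ∀ α ∈ Δ, ∀ β ∈ Δ, β - (2 * ⟪β, α⟫_ℝ / ⟪α, α⟫_ℝ) • α ∈ Δ) :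
    ∀ u ∈ weylGroup Δ, ∀ α ∈ Δ, u α ∈ Δ := by
  set H : Subgroup (E ≃ₗᵢ[ℝ] E) :=
  { carrier := {u | ∀ α ∈ Δ, u α ∈ Δ}
    one_mem' := by intro α hα; simpa using hα
    mul_mem' := by
      intro u v hu hv α hα
      have : (u * v) α = u (v α) := rfl
      rw [this]; exact hu _ (hv _ hα)
    inv_mem' := by
      classical
      intro u hu α hα
      have himg : Δ.image u ⊆ Δ := Finset.image_subset_iff.2 hu
      have hcard : (Δ.image u).card = Δ.card :=
        Finset.card_image_of_injective _ u.injective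
      have heq : Δ.image u = Δ := Finset.eq_of_subset_of_card_le himg (le_of_eq hcard.symm)
      obtain ⟨β, hβ, hβα⟩ := Finset.mem_image.1 (heq ▸ hα)
      have : u⁻¹ α = β := by
        rw [← hβα, LinearIsometryEquiv.coe_inv]
        exact u.symm_apply_apply β
      rw [this]; exact hβ } with hH
  have hle : weylGroup Δ ≤ H := by
    apply Subgroup.closure_le _ |>.2
    rintro u ⟨α, hα, hu⟩
    intro β hβ
    rw [hu β]
    exact hrefl α hα β hβ
  exact fun u hu => hle hu

lemma dual_cone_lemma [FiniteDimensional ℝ E] {ι : Type*} [Fintype ι] (b : Module.Basis ι ℝ E) (v : E) :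
    (∀ lam : E, (∀ i, 0 ≤ ⟪lam, b i⟫_ℝ) → ⟪v, lam⟫_ℝ ≤ 0) ↔
    ∀ i, 0 ≤ b.repr (-v) i := by
  classical
  constructor
  · intro h j
    set d : E := (toDual ℝ E).symm (LinearMap.toContinuousLinearMap (b.coord j)) with hd
    have hdx : ∀ x : E, ⟪d, x⟫_ℝ = b.repr x j := by
      intro x
      rw [hd, toDual_symm_apply]
      simp [Module.Basis.coord_apply]
    have hdom : ∀ i, 0 ≤ ⟪d, b i⟫_ℝ := by
      intro i
      rw [hdx]
      simp [Module.Basis.repr_self, Finsupp.single_apply]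
      split <;> norm_num
    have h1 : ⟪v, d⟫_ℝ ≤ 0 := h d (fun i => real_inner_comm (b i) d ▸ hdom i)
    have h2 : ⟪d, v⟫_ℝ ≤ 0 := by rwa [real_inner_comm]
    rw [hdx v] at h2
    rw [map_neg]
    simpa using h2
  · intro h lam hlam
    have hv : v = -∑ i, b.repr (-v) i • b i := by
      have := b.sum_repr (-v)
      rw [this]; simp
    rw [hv, inner_neg_left, neg_nonpos]
    rw [sum_inner]
    apply Finset.sum_nonneg
    intro i _
    rw [real_inner_smul_left]
    exact mul_nonneg (h i) (by rw [real_inner_comm]; exact hlam i)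

end Aux

/-- Variation of Mumford's quotients, combinatorial form.
For strictly dominant `χ₁, χ₂ ∈ C⁰`: `W^{st}_{χ₁} = W^{st}_{χ₂}` iff
`{w ∈ W : χ₁ ∈ wA} = {w ∈ W : χ₂ ∈ wA}`, where `A` is the cone of nonnegative
combinations of the simple roots `b i` and `W^{st}_χ = {w ∈ W : (wχ, λ) ≤ 0 ∀ λ ∈ C}`. -/
theorem git_equivalence_iff_same_cones {E : Type*} [NormedAddCommGroup E]
    [InnerProductSpace ℝ E] [FiniteDimensional ℝ E]
    {ι : Type*} [Fintype ι]
    (Δ Δpos : Finset E) (b : Module.Basis ι ℝ E)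
    -- `Δ` is a finite reduced crystallographic root system:
    (hΔ0 : (0 : E) ∉ Δ)
    (hneg : ∀ α ∈ Δ, -α ∈ Δ)
    (hrefl : ∀ α ∈ Δ, ∀ β ∈ Δ, β - (2 * ⟪β, α⟫_ℝ / ⟪α, α⟫_ℝ) • α ∈ Δ)
    (hcrys : ∀ α ∈ Δ, ∀ β ∈ Δ, ∃ n : ℤ, 2 * ⟪β, α⟫_ℝ / ⟪α, α⟫_ℝ = (n : ℝ))
    (hred : ∀ α ∈ Δ, ∀ t : ℝ, t • α ∈ Δ → t = 1 ∨ t = -1)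
    -- `Δpos` is a system of positive roots with simple roots the basis `b`:
    (hposΔ : Δpos ⊆ Δ)
    (hdecomp : ∀ α ∈ Δ, (α ∈ Δpos ∧ -α ∉ Δpos) ∨ (-α ∈ Δpos ∧ α ∉ Δpos))
    (hsimple : ∀ i, b i ∈ Δpos)
    (hposrep : ∀ α ∈ Δpos, ∀ i, 0 ≤ b.repr α i)
    -- two strictly dominant weights:
    (χ₁ χ₂ : E) (hχ₁ : ∀ i, 0 < ⟪χ₁, b i⟫_ℝ) (hχ₂ : ∀ i, 0 < ⟪χ₂, b i⟫_ℝ) :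
    ({w : E ≃ₗᵢ[ℝ] E | w ∈ weylGroup Δ ∧
        ∀ lam : E, (∀ i, 0 ≤ ⟪lam, b i⟫_ℝ) → ⟪w χ₁, lam⟫_ℝ ≤ 0} =
      {w : E ≃ₗᵢ[ℝ] E | w ∈ weylGroup Δ ∧
        ∀ lam : E, (∀ i, 0 ≤ ⟪lam, b i⟫_ℝ) → ⟪w χ₂, lam⟫_ℝ ≤ 0}) ↔
    ({w : E ≃ₗᵢ[ℝ] E | w ∈ weylGroup Δ ∧
        ∃ c : ι → ℝ, (∀ i, 0 ≤ c i) ∧ χ₁ = w (∑ i, c i • b i)} =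
      {w : E ≃ₗᵢ[ℝ] E | w ∈ weylGroup Δ ∧
        ∃ c : ι → ℝ, (∀ i, 0 ≤ c i) ∧ χ₂ = w (∑ i, c i • b i)}) := by
  classical
  have hW : ∀ u ∈ weylGroup Δ, ∀ α ∈ Δ, u α ∈ Δ := weylGroup_maps Δ hrefl
  -- inverse-application helper
  have hinner : ∀ (u : E ≃ₗᵢ[ℝ] E) (x y : E), ⟪x, u y⟫_ℝ = ⟪u⁻¹ x, y⟫_ℝ := by
    intro u x y
    conv_lhs => rw [← u.apply_symm_apply x]
    rw [u.inner_map_map]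
    rfl
  have happinv : ∀ (u : E ≃ₗᵢ[ℝ] E) (x : E), u (u⁻¹ x) = x := by
    intro u x
    rw [LinearIsometryEquiv.coe_inv]
    exact u.apply_symm_apply x
  have happinv' : ∀ (u : E ≃ₗᵢ[ℝ] E) (x : E), u⁻¹ (u x) = x := by
    intro u x
    rw [LinearIsometryEquiv.coe_inv]
    exact u.symm_apply_apply x
  -- strictly dominant pairs positively with positive roots
  have hposin : ∀ (χ : E), (∀ i, 0 < ⟪χ, b i⟫_ℝ) → ∀ α ∈ Δpos, 0 < ⟪χ, α⟫_ℝ := by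
    intro χ hχ α hα
    have hsum : ⟪χ, α⟫_ℝ = ∑ i, b.repr α i * ⟪χ, b i⟫_ℝ := by
      conv_lhs => rw [← b.sum_repr α]
      rw [inner_sum]
      simp [real_inner_smul_right]
    rw [hsum]
    apply Finset.sum_pos'
    · intro i _
      exact mul_nonneg (hposrep α hα i) (hχ i).le
    · have hα0 : α ≠ 0 := fun h => hΔ0 (h ▸ hposΔ hα)
      have : ∃ i, b.repr α i ≠ 0 := by
        by_contra hc
        push_neg at hc
        apply hα0
        have : b.repr α = 0 := Finsupp.ext fun i => hc i
        have := congrArg b.repr.symm this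
        simpa using this
      obtain ⟨i, hi⟩ := this
      exact ⟨i, Finset.mem_univ i,
        mul_pos (lt_of_le_of_ne (hposrep α hα i) (Ne.symm hi)) (hχ i)⟩
  -- a root pairing negatively with a strictly dominant vector is negative
  have hrootneg : ∀ (γ : E), γ ∈ Δ → ⟪χ₁, γ⟫_ℝ < 0 → -γ ∈ Δpos := by
    intro γ hγ hlt
    rcases hdecomp γ hγ with ⟨h1, _⟩ | ⟨h1, _⟩
    · exact absurd (hposin χ₁ hχ₁ γ h1) (by linarith)
    · exact h1
  -- reflections lie in the Weyl group
  have hreflmem : ∀ α ∈ Δ, (Submodule.reflection ((ℝ ∙ α)ᗮ) ∈ weylGroup Δ ∧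
      ∀ x : E, Submodule.reflection ((ℝ ∙ α)ᗮ) x = x - (2 * ⟪x, α⟫_ℝ / ⟪α, α⟫_ℝ) • α) := by
    intro α hα
    have hform : ∀ x : E, Submodule.reflection ((ℝ ∙ α)ᗮ) x = x - (2 * ⟪x, α⟫_ℝ / ⟪α, α⟫_ℝ) • α := by
      intro x
      rw [Submodule.reflection_orthogonal_apply, Submodule.reflection_singleton_apply, neg_sub]
      congr 1
      rw [real_inner_comm α x, real_inner_self_eq_norm_sq α]
      rw [two_smul, ← add_smul]
      congr 1
      simp only [RCLike.ofReal_real_eq_id, id_eq]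
      ring
    exact ⟨Subgroup.subset_closure ⟨α, hα, hform⟩, hform⟩
  -- the orbit of χ₁ is finite
  set Orb : Set E := {x : E | ∃ u ∈ weylGroup Δ, x = u χ₁} with hOrb
  have horbfin : Orb.Finite := by
    apply Set.Finite.subset
      (Set.finite_range fun d : ι → Δ => ∑ i, b.repr χ₁ i • (d i : E))
    rintro x ⟨u, hu, rfl⟩
    refine ⟨fun i => ⟨u (b i), hW u hu _ (hposΔ (hsimple i))⟩, ?_⟩
    show ∑ i, b.repr χ₁ i • u (b i) = u χ₁
    conv_rhs => rw [← b.sum_repr χ₁]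
    rw [map_sum]
    simp
  obtain ⟨μ, hμ, hmin⟩ := Set.exists_min_image Orb (fun x => ⟪x, χ₁⟫_ℝ) horbfin
    ⟨χ₁, 1, one_mem _, by simp⟩
  obtain ⟨w, hwW, rfl⟩ := hμ
  -- minimizers of ⟪·, χ₁⟫ on the orbit are strictly antidominant
  have key : ∀ u, u ∈ weylGroup Δ → (∀ y ∈ Orb, ⟪u χ₁, χ₁⟫_ℝ ≤ ⟪y, χ₁⟫_ℝ) →
      ∀ i, ⟪u χ₁, b i⟫_ℝ < 0 := by
    intro u hu hm i
    have hbiΔ : b i ∈ Δ := hposΔ (hsimple i)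
    have hne : ⟪u χ₁, b i⟫_ℝ ≠ 0 := by
      have h1 : ⟪u χ₁, b i⟫_ℝ = ⟪χ₁, u⁻¹ (b i)⟫_ℝ := by
        rw [real_inner_comm, hinner u (b i) χ₁, real_inner_comm]
      have hγ : u⁻¹ (b i) ∈ Δ := hW u⁻¹ (inv_mem hu) _ hbiΔ
      rw [h1]
      rcases hdecomp _ hγ with ⟨h2, _⟩ | ⟨h2, _⟩
      · exact ne_of_gt (hposin χ₁ hχ₁ _ h2)
      · have := hposin χ₁ hχ₁ _ h2
        rw [inner_neg_right] at this
        linarith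
    have hle : ⟪u χ₁, b i⟫_ℝ ≤ 0 := by
      by_contra hpos
      push_neg at hpos
      obtain ⟨hsW, hsform⟩ := hreflmem (b i) hbiΔ
      set s := Submodule.reflection ((ℝ ∙ (b i))ᗮ) with hs
      have hmem : s (u χ₁) ∈ Orb := ⟨s * u, mul_mem hsW hu, rfl⟩
      have hval : ⟪s (u χ₁), χ₁⟫_ℝ =
          ⟪u χ₁, χ₁⟫_ℝ - (2 * ⟪u χ₁, b i⟫_ℝ / ⟪b i, b i⟫_ℝ) * ⟪b i, χ₁⟫_ℝ := by
        rw [hsform (u χ₁), inner_sub_left, real_inner_smul_left]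
      have hlt : ⟪s (u χ₁), χ₁⟫_ℝ < ⟪u χ₁, χ₁⟫_ℝ := by
        rw [hval]
        have hbb : (0:ℝ) < ⟪b i, b i⟫_ℝ := by
          rw [real_inner_self_eq_norm_sq]
          have h0 : (0:ℝ) < ‖b i‖ := norm_pos_iff.2 (b.ne_zero i)
          positivity
        have hbχ : (0:ℝ) < ⟪b i, χ₁⟫_ℝ := by
          rw [real_inner_comm]; exact hχ₁ i
        have : (0:ℝ) < (2 * ⟪u χ₁, b i⟫_ℝ / ⟪b i, b i⟫_ℝ) * ⟪b i, χ₁⟫_ℝ :=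
          mul_pos (div_pos (by linarith) hbb) hbχ
        linarith
      exact absurd (hm _ hmem) (by simp only [not_le]; exact hlt)
    exact lt_of_le_of_ne hle hne
  have hanti : ∀ i, ⟪w χ₁, b i⟫_ℝ < 0 := key w hwW hmin
  have hanti' : ∀ i, ⟪w⁻¹ χ₁, b i⟫_ℝ < 0 := by
    apply key w⁻¹ (inv_mem hwW)
    intro y hy
    have heq : ⟪w⁻¹ χ₁, χ₁⟫_ℝ = ⟪w χ₁, χ₁⟫_ℝ := by
      rw [← hinner w χ₁ χ₁, real_inner_comm]
    rw [heq]
    exact hmin y hy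
  -- w and w⁻¹ send simple roots to negative roots
  have hneg1 : ∀ i, -(w (b i)) ∈ Δpos := by
    intro i
    apply hrootneg _ (hW w hwW _ (hposΔ (hsimple i)))
    rw [hinner w χ₁ (b i)]
    exact hanti' i
  have hneg2 : ∀ i, -(w⁻¹ (b i)) ∈ Δpos := by
    intro i
    apply hrootneg _ (hW w⁻¹ (inv_mem hwW) _ (hposΔ (hsimple i)))
    rw [hinner w⁻¹ χ₁ (b i)]
    simpa using hanti i
  -- cone mapping
  have hconemap : ∀ (u : E ≃ₗᵢ[ℝ] E), (∀ i, -(u (b i)) ∈ Δpos) →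
      ∀ v : E, (∀ i, 0 ≤ b.repr v i) → ∀ j, 0 ≤ b.repr (-(u v)) j := by
    intro u hu v hv j
    have h1 : -(u v) = ∑ i, b.repr v i • (-(u (b i))) := by
      have h2 : u v = ∑ i, b.repr v i • u (b i) := by
        conv_lhs => rw [← b.sum_repr v]
        rw [map_sum]
        simp
      rw [h2, ← Finset.sum_neg_distrib]
      simp [smul_neg]
    rw [h1, map_sum]
    rw [Finsupp.finset_sum_apply]
    apply Finset.sum_nonneg
    intro i _
    rw [map_smul, Finsupp.smul_apply, smul_eq_mul]
    exact mul_nonneg (hv i) (hposrep _ (hu i) j)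
  -- flipping along w₀ := w
  have hflip : ∀ v : E, (∀ i, 0 ≤ b.repr v i) ↔ (∀ j, 0 ≤ b.repr (-(w v)) j) := by
    intro v
    constructor
    · exact hconemap w hneg1 v
    · intro h j
      have h2 := hconemap w⁻¹ hneg2 (-(w v)) h j
      have h3 : -(w⁻¹ (-(w v))) = v := by
        rw [map_neg, happinv' w v, neg_neg]
      rwa [h3] at h2
  -- per-element characterization
  have hmain : ∀ (u : E ≃ₗᵢ[ℝ] E) (χ : E),
      (u ∈ weylGroup Δ ∧ ∀ lam : E, (∀ i, 0 ≤ ⟪lam, b i⟫_ℝ) → ⟪u χ, lam⟫_ℝ ≤ 0) ↔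
      ((w * u)⁻¹ ∈ weylGroup Δ ∧
        ∃ c : ι → ℝ, (∀ i, 0 ≤ c i) ∧ χ = (w * u)⁻¹ (∑ i, c i • b i)) := by
    intro u χ
    have hmem : u ∈ weylGroup Δ ↔ (w * u)⁻¹ ∈ weylGroup Δ := by
      constructor
      · intro h; exact inv_mem (mul_mem hwW h)
      · intro h
        have h2 : w * u ∈ weylGroup Δ := by simpa using inv_mem h
        have : u = w⁻¹ * (w * u) := by group
        rw [this]
        exact mul_mem (inv_mem hwW) h2
    have hpred : (∀ lam : E, (∀ i, 0 ≤ ⟪lam, b i⟫_ℝ) → ⟪u χ, lam⟫_ℝ ≤ 0) ↔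
        (∃ c : ι → ℝ, (∀ i, 0 ≤ c i) ∧ χ = (w * u)⁻¹ (∑ i, c i • b i)) := by
      rw [dual_cone_lemma b (u χ)]
      have hnn : -(-(u χ)) = u χ := neg_neg _
      constructor
      · intro h
        have h2 := (hflip (-(u χ))).1 h
        refine ⟨fun i => b.repr ((w * u) χ) i, ?_, ?_⟩
        · intro i
          have h3 : -(w (-(u χ))) = (w * u) χ := by
            rw [map_neg, neg_neg]; rfl
          have := h2 i
          rwa [h3] at this
        · rw [b.sum_repr ((w * u) χ)]
          exact (happinv' (w * u) χ).symm
      · rintro ⟨c, hc, hχeq⟩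
        apply (hflip (-(u χ))).2
        intro j
        have h3 : -(w (-(u χ))) = (w * u) χ := by
          rw [map_neg, neg_neg]; rfl
        rw [h3]
        have h4 : (w * u) χ = ∑ i, c i • b i := by
          rw [hχeq, happinv (w * u)]
        rw [h4]
        have h5 : ⇑(b.repr (∑ i, c i • b i)) = c := b.repr_sum_self c
        rw [h5]
        exact hc j
    constructor
    · rintro ⟨h1, h2⟩; exact ⟨hmem.1 h1, hpred.1 h2⟩
    · rintro ⟨h1, h2⟩; exact ⟨hmem.2 h1, hpred.2 h2⟩
  -- conclude
  constructor
  · intro h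
    ext v
    have h1 := hmain (w⁻¹ * v⁻¹) χ₁
    have h2 := hmain (w⁻¹ * v⁻¹) χ₂
    have hv : (w * (w⁻¹ * v⁻¹))⁻¹ = v := by group
    rw [hv] at h1 h2
    have hext := Set.ext_iff.1 h (w⁻¹ * v⁻¹)
    simp only [Set.mem_setOf_eq] at hext ⊢
    constructor
    · intro hm; exact h2.1 (hext.1 (h1.2 hm))
    · intro hm; exact h1.1 (hext.2 (h2.2 hm))
  · intro h
    ext u
    have h1 := hmain u χ₁
    have h2 := hmain u χ₂
    have hext := Set.ext_iff.1 h (w * u)⁻¹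
    simp only [Set.mem_setOf_eq] at hext ⊢
    constructor
    · intro hm; exact h2.2 (hext.1 (h1.1 hm))
    · intro hm; exact h1.2 (hext.2 (h2.1 hm))
end

section
/- For χ ∈ C⁰ define the cone σ_χ = C ∩ ⋂_{w ∈ W, χ ∈ wA} wA. Then: (a) the collection {σ_χ : χ ∈ C⁰} is a finite set of closed convex cones; (b) the union ⋃_{χ ∈ C⁰} σ_χ equals C; (c) for any χ₁, χ₂ ∈ C⁰ the intersection σ_{χ₁} ∩ σ_{χ₂} is a face (extreme subset) of σ_{χ₁}: whenever a point of σ_{χ₁} ∩ σ_{χ₂} lies strictly between two points of σ_{χ₁}, both of those points lie in σ_{χ₁} ∩ σ_{χ₂}. Thus the cones σ_χ form a fan with support C. -/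
open InnerProductSpace

/-- Existence of the reflection in (the hyperplane orthogonal to) a nonzero vector,
as a linear isometry equivalence. -/
lemma exists_reflection_isometry {E : Type*} [NormedAddCommGroup E] [InnerProductSpace ℝ E]
    [FiniteDimensional ℝ E] (α : E) (hα : α ≠ 0) :
    ∃ u : E ≃ₗᵢ[ℝ] E, ∀ x, u x = x - (2 * ⟪x, α⟫_ℝ / ⟪α, α⟫_ℝ) • α := by
  refine ⟨Submodule.reflection ((ℝ ∙ α)ᗮ), fun x => ?_⟩
  rw [Submodule.reflection_apply, Submodule.starProjection_orthogonal_val, Submodule.starProjection_singleton]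
  have h2 : (2:ℝ) * ⟪x, α⟫_ℝ / ⟪α, α⟫_ℝ = 2 * (⟪α, x⟫_ℝ / (‖α‖ ^ 2 : ℝ)) := by
    rw [real_inner_comm x α, real_inner_self_eq_norm_sq]; ring
  rw [h2, two_smul]
  simp only [RCLike.ofReal_real_eq_id, id_eq]
  module

/-- For strictly dominant `χ ∈ C⁰` define
`σ_χ = C ∩ ⋂_{w ∈ W, χ ∈ wA} wA`. Then: (a) `{σ_χ : χ ∈ C⁰}` is a finite family of
closed convex cones; (b) `⋃_{χ ∈ C⁰} σ_χ = C`; (c) for `χ₁, χ₂ ∈ C⁰` the intersection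
`σ_{χ₁} ∩ σ_{χ₂}` is a face (extreme subset) of `σ_{χ₁}`.  Thus the `σ_χ` form a fan
with support `C`. -/
theorem fan_of_GIT_cones {E : Type*} [NormedAddCommGroup E]
    [InnerProductSpace ℝ E] [FiniteDimensional ℝ E]
    {ι : Type*} [Fintype ι]
    (Δ Δpos : Finset E) (b : Module.Basis ι ℝ E)
    -- `Δ` is a finite reduced crystallographic root system:
    (hΔ0 : (0 : E) ∉ Δ)
    (hneg : ∀ α ∈ Δ, -α ∈ Δ)
    (hrefl : ∀ α ∈ Δ, ∀ β ∈ Δ, β - (2 * ⟪β, α⟫_ℝ / ⟪α, α⟫_ℝ) • α ∈ Δ)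
    (hcrys : ∀ α ∈ Δ, ∀ β ∈ Δ, ∃ n : ℤ, 2 * ⟪β, α⟫_ℝ / ⟪α, α⟫_ℝ = (n : ℝ))
    (hred : ∀ α ∈ Δ, ∀ t : ℝ, t • α ∈ Δ → t = 1 ∨ t = -1)
    -- `Δpos` is a system of positive roots with simple roots the basis `b`:
    (hposΔ : Δpos ⊆ Δ)
    (hdecomp : ∀ α ∈ Δ, (α ∈ Δpos ∧ -α ∉ Δpos) ∨ (-α ∈ Δpos ∧ α ∉ Δpos))
    (hsimple : ∀ i, b i ∈ Δpos)
    (hposrep : ∀ α ∈ Δpos, ∀ i, 0 ≤ b.repr α i)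
    -- the dominant chamber `C`, its interior `C⁰`, the simple-root cone `A`,
    -- and the cones `σ_χ`:
    (C C0 A : Set E)
    (hC : C = {lam : E | ∀ i, 0 ≤ ⟪lam, b i⟫_ℝ})
    (hC0 : C0 = {χ : E | ∀ i, 0 < ⟪χ, b i⟫_ℝ})
    (hA : A = {x : E | ∃ c : ι → ℝ, (∀ i, 0 ≤ c i) ∧ x = ∑ i, c i • b i})
    (σ : E → Set E)
    (hσ : ∀ χ : E, σ χ =
      C ∩ ⋂ w ∈ {w : E ≃ₗᵢ[ℝ] E | w ∈ weylGroup Δ ∧ χ ∈ ⇑w '' A}, ⇑w '' A) :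
    -- (a) finitely many closed convex cones
    ({s : Set E | ∃ χ ∈ C0, s = σ χ}.Finite ∧
      ∀ χ ∈ C0, IsClosed (σ χ) ∧ Convex ℝ (σ χ) ∧
        ∀ t : ℝ, 0 ≤ t → ∀ x ∈ σ χ, t • x ∈ σ χ) ∧
    -- (b) their union is the dominant chamber
    (⋃ χ ∈ C0, σ χ) = C ∧
    -- (c) pairwise intersections are faces (extreme subsets)
    (∀ χ₁ ∈ C0, ∀ χ₂ ∈ C0, ∀ p ∈ σ χ₁ ∩ σ χ₂, ∀ x ∈ σ χ₁, ∀ y ∈ σ χ₁,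
      ∀ t : ℝ, 0 < t → t < 1 → p = t • x + (1 - t) • y →
        x ∈ σ χ₁ ∩ σ χ₂ ∧ y ∈ σ χ₁ ∩ σ χ₂) := by
  classical
  -- ### basic facts
  have hbΔ : ∀ i, b i ∈ Δ := fun i => hposΔ (hsimple i)
  have hb0 : ∀ i, (b i : E) ≠ 0 := fun i => b.ne_zero i
  have hself : ∀ v : E, v ≠ 0 → 0 < ⟪v, v⟫_ℝ := fun v hv =>
    lt_of_le_of_ne real_inner_self_nonneg (fun h => hv (inner_self_eq_zero.mp h.symm))
  have hbb : ∀ i, 0 < ⟪b i, b i⟫_ℝ := fun i => hself _ (hb0 i)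
  -- the dual basis realized inside `E`
  obtain ⟨ϖ, hϖ⟩ : ∃ ϖ : ι → E, ∀ i x, ⟪ϖ i, x⟫_ℝ = b.repr x i := by
    refine ⟨fun i => (InnerProductSpace.toDual ℝ E).symm
      ((b.coord i).toContinuousLinearMap), fun i x => ?_⟩
    simp [InnerProductSpace.toDual_symm_apply]
  have hϖb : ∀ i j, ⟪ϖ i, b j⟫_ℝ = if j = i then 1 else 0 := by
    intro i j; rw [hϖ]; simp [Module.Basis.repr_self, Finsupp.single_apply]
  have hϖ0 : ∀ i, 0 < ⟪ϖ i, ϖ i⟫_ℝ := by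
    intro i
    refine hself _ (fun h => ?_)
    have := hϖb i i
    rw [h] at this
    simp at this
  have hxsum : ∀ x : E, x = ∑ i, b.repr x i • b i := fun x => (b.sum_repr x).symm
  have hreprsum : ∀ (c : ι → ℝ) (j : ι), b.repr (∑ i, c i • b i) j = c j := by
    intro c j
    rw [← hϖ, inner_sum]
    simp only [real_inner_smul_right, hϖb]
    simp
  have hinner_expand : ∀ x y : E, ⟪x, y⟫_ℝ = ∑ i, b.repr x i * ⟪b i, y⟫_ℝ := by
    intro x y
    conv_lhs => rw [hxsum x]
    rw [sum_inner]
    simp [real_inner_smul_left]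
  -- membership criteria
  have memA : ∀ x, x ∈ A ↔ ∀ i, 0 ≤ b.repr x i := by
    intro x; rw [hA]; constructor
    · rintro ⟨c, hc, rfl⟩ i; rw [hreprsum]; exact hc i
    · intro h; exact ⟨fun i => b.repr x i, h, hxsum x⟩
  have hpair : ∀ (v : E ≃ₗᵢ[ℝ] E) (y : E) (k : ι),
      ⟪y, v (ϖ k)⟫_ℝ = b.repr (v.symm y) k := by
    intro v y k
    calc ⟪y, v (ϖ k)⟫_ℝ = ⟪v (v.symm y), v (ϖ k)⟫_ℝ := by rw [v.apply_symm_apply]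
      _ = ⟪v.symm y, ϖ k⟫_ℝ := v.inner_map_map _ _
      _ = b.repr (v.symm y) k := by rw [real_inner_comm, hϖ]
  have memwA : ∀ (w : E ≃ₗᵢ[ℝ] E) (x : E), x ∈ ⇑w '' A ↔ ∀ i, 0 ≤ ⟪x, w (ϖ i)⟫_ℝ := by
    intro w x
    constructor
    · rintro ⟨a, ha, rfl⟩ i
      rw [hpair, w.symm_apply_apply]
      exact (memA a).1 ha i
    · intro h
      refine ⟨w.symm x, (memA _).2 fun i => ?_, w.apply_symm_apply x⟩
      rw [← hpair]
      exact h i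
  have hmemσ : ∀ χ x, x ∈ σ χ ↔ ((∀ i, 0 ≤ ⟪x, b i⟫_ℝ) ∧
      ∀ w : E ≃ₗᵢ[ℝ] E, w ∈ weylGroup Δ → (∀ i, 0 ≤ ⟪χ, w (ϖ i)⟫_ℝ) →
        ∀ i, 0 ≤ ⟪x, w (ϖ i)⟫_ℝ) := by
    intro χ x
    rw [hσ, Set.mem_inter_iff, hC]
    simp only [Set.mem_iInter, Set.mem_setOf_eq]
    constructor
    · rintro ⟨h1, h2⟩
      exact ⟨h1, fun w hw hχ => (memwA w x).1 (h2 w ⟨hw, (memwA w χ).2 hχ⟩)⟩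
    · rintro ⟨h1, h2⟩
      exact ⟨h1, fun w hw => (memwA w x).2 (h2 w hw.1 ((memwA w χ).1 hw.2))⟩
  -- ### distinct simple roots have nonpositive inner products
  have hL3 : ∀ i j, i ≠ j → ⟪b i, b j⟫_ℝ ≤ 0 := by
    intro i j hij
    by_contra h
    push_neg at h
    set c : ℝ := 2 * ⟪b j, b i⟫_ℝ / ⟪b i, b i⟫_ℝ with hcdef
    have hc : 0 < c := by
      apply div_pos _ (hbb i)
      rw [real_inner_comm]
      linarith
    have hβ : b j - c • b i ∈ Δ := hrefl (b i) (hbΔ i) (b j) (hbΔ j)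
    have hrepri : b.repr (b j - c • b i) i = -c := by
      simp [Module.Basis.repr_self, Finsupp.single_apply, hij, Ne.symm hij]
    have hreprj : b.repr (b j - c • b i) j = 1 := by
      simp [Module.Basis.repr_self, Finsupp.single_apply, hij, Ne.symm hij]
    rcases hdecomp _ hβ with ⟨hp, -⟩ | ⟨hp, -⟩
    · have := hposrep _ hp i
      rw [hrepri] at this
      linarith
    · have := hposrep _ hp j
      rw [map_neg] at this
      simp only [Finsupp.coe_neg, Pi.neg_apply] at this
      rw [hreprj] at this
      linarith
  -- ### key convexity lemma: "dominant ⇒ nonnegative coordinates"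
  have hL4 : ∀ x : E, (∀ j, b.repr x j ≠ 0 → 0 ≤ ⟪x, b j⟫_ℝ) → ∀ j, 0 ≤ b.repr x j := by
    intro x hx
    set c : ι → ℝ := fun j => b.repr x j with hc
    set d : ι → ℝ := fun j => max (-(c j)) 0 with hd
    have hd0 : ∀ j, 0 ≤ d j := fun j => le_max_right _ _
    have hcd : ∀ j, 0 ≤ c j + d j := by
      intro j
      rcases le_total (c j) 0 with h | h
      · have : d j = -(c j) := max_eq_left (by linarith)
        rw [this]; linarith
      · have : d j = 0 := max_eq_right (by linarith)
        rw [this]; linarith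
    have hprod : ∀ j, (c j + d j) * d j = 0 := by
      intro j
      rcases le_total (c j) 0 with h | h
      · have : d j = -(c j) := max_eq_left (by linarith)
        rw [this]; ring
      · have : d j = 0 := max_eq_right (by linarith)
        rw [this]; ring
    set z : E := ∑ j, d j • b j with hz
    have hxz : x + z = ∑ j, (c j + d j) • b j := by
      conv_lhs => rw [hxsum x]
      rw [hz, ← Finset.sum_add_distrib]
      exact Finset.sum_congr rfl fun j _ => by rw [← add_smul]
    have h1 : ⟪x + z, z⟫_ℝ ≤ 0 := by
      rw [hxz, hz, sum_inner]
      apply Finset.sum_nonpos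
      intro i _
      rw [real_inner_smul_left, inner_sum, Finset.mul_sum]
      apply Finset.sum_nonpos
      intro j _
      rw [real_inner_smul_right]
      rcases eq_or_ne i j with rfl | hne
      · have h0 : (c i + d i) * (d i * ⟪b i, b i⟫_ℝ) = ((c i + d i) * d i) * ⟪b i, b i⟫_ℝ := by
          ring
        rw [h0, hprod]; simp
      · nlinarith [mul_nonneg (hcd i) (hd0 j), hL3 i j hne]
    have h2 : 0 ≤ ⟪x, z⟫_ℝ := by
      rw [hz, inner_sum]
      apply Finset.sum_nonneg
      intro j _
      rw [real_inner_smul_right]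
      rcases eq_or_ne (d j) 0 with h0 | h0
      · rw [h0]; simp
      · have hdj : 0 < d j := lt_of_le_of_ne (hd0 j) (Ne.symm h0)
        have hcj : c j < 0 := by
          by_contra hcj
          push_neg at hcj
          have : d j = 0 := max_eq_right (by linarith)
          exact h0 this
        exact mul_nonneg (hd0 j) (hx j (ne_of_lt hcj))
    have hzz : ⟪z, z⟫_ℝ ≤ 0 := by
      have hadd : ⟪x + z, z⟫_ℝ = ⟪x, z⟫_ℝ + ⟪z, z⟫_ℝ := inner_add_left _ _ _
      linarith
    have hz0 : z = 0 := inner_self_eq_zero.mp (le_antisymm hzz real_inner_self_nonneg)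
    intro j
    have hϖz : ⟪ϖ j, z⟫_ℝ = d j := by
      rw [hz, inner_sum]
      simp only [real_inner_smul_right, hϖb]
      simp
    rw [hz0, inner_zero_right] at hϖz
    have h5 : -(c j) ≤ d j := le_max_left _ _
    have h6 : (0:ℝ) = d j := hϖz
    show 0 ≤ c j
    linarith
  -- ### fundamental weights pair nonnegatively
  have hϖϖ : ∀ i k, 0 ≤ ⟪ϖ i, ϖ k⟫_ℝ := by
    intro i k
    have h := hL4 (ϖ k) (fun j _ => by
      rw [hϖb]
      split <;> norm_num) i
    rw [← hϖ] at h
    exact h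
  -- ### the Weyl group permutes the roots
  have hWroot : ∀ w : E ≃ₗᵢ[ℝ] E, w ∈ weylGroup Δ →
      (∀ α ∈ Δ, w α ∈ Δ) ∧ (∀ α ∈ Δ, w.symm α ∈ Δ) := by
    intro w hw
    have hw' : w ∈ Subgroup.closure
        {u : E ≃ₗᵢ[ℝ] E | ∃ α ∈ Δ, ∀ x : E, u x = x - (2 * ⟪x, α⟫_ℝ / ⟪α, α⟫_ℝ) • α} := hw
    refine Subgroup.closure_induction ?_ ?_ ?_ ?_ hw'
    · rintro u ⟨α₀, hα₀, hu⟩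
      have hα₀0 : α₀ ≠ 0 := fun h0 => hΔ0 (h0 ▸ hα₀)
      have hαα : ⟪α₀, α₀⟫_ℝ ≠ 0 := ne_of_gt (hself _ hα₀0)
      have hinv : ∀ x, u (u x) = x := by
        intro x
        rw [hu, hu x]
        rw [inner_sub_left, real_inner_smul_left]
        have heq : 2 * (⟪x, α₀⟫_ℝ - 2 * ⟪x, α₀⟫_ℝ / ⟪α₀, α₀⟫_ℝ * ⟪α₀, α₀⟫_ℝ) / ⟪α₀, α₀⟫_ℝ
            = -(2 * ⟪x, α₀⟫_ℝ / ⟪α₀, α₀⟫_ℝ) := by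
          field_simp
          ring
        rw [heq, neg_smul]
        abel
      constructor
      · intro α hα; rw [hu]; exact hrefl α₀ hα₀ α hα
      · intro α hα
        have hs : u.symm α = u α := by
          have : u (u α) = α := hinv α
          rw [← this, u.symm_apply_apply, this]
        rw [hs, hu]
        exact hrefl α₀ hα₀ α hα
    · constructor <;> intro α hα <;> exact hα
    · rintro g h hg hh ⟨hg1, hg2⟩ ⟨hh1, hh2⟩
      constructor
      · intro α hα
        have : (g * h) α = g (h α) := rfl
        rw [this]
        exact hg1 _ (hh1 _ hα)
      · intro α hα
        have hgh : (g * h).symm α = h.symm (g.symm α) := by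
          refine (g * h).injective ?_
          rw [(g * h).apply_symm_apply]
          show α = g (h (h.symm (g.symm α)))
          rw [h.apply_symm_apply, g.apply_symm_apply]
        rw [hgh]
        exact hh2 _ (hg2 _ hα)
    · rintro g hg ⟨hg1, hg2⟩
      constructor
      · intro α hα
        rw [LinearIsometryEquiv.inv_def]
        exact hg2 _ hα
      · intro α hα
        rw [LinearIsometryEquiv.inv_def, LinearIsometryEquiv.symm_symm]
        exact hg1 _ hα
  -- ### the Weyl group is finite
  have hWfin : Set.Finite {w : E ≃ₗᵢ[ℝ] E | w ∈ weylGroup Δ} := by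
    have hsub : (fun w : E ≃ₗᵢ[ℝ] E => fun i : ι => w (b i)) '' {w | w ∈ weylGroup Δ}
        ⊆ Set.pi Set.univ (fun _ : ι => (Δ : Set E)) := by
      rintro _ ⟨w, hw, rfl⟩
      intro i _
      exact (hWroot w hw).1 _ (hbΔ i)
    have hfin2 : (Set.pi Set.univ (fun _ : ι => (Δ : Set E))).Finite :=
      Set.Finite.pi (fun _ => Δ.finite_toSet)
    apply Set.Finite.of_finite_image (hfin2.subset hsub)
    intro w _ v _ heq
    have hagree : ∀ x, w x = v x := by
      intro x
      conv_lhs => rw [hxsum x]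
      conv_rhs => rw [hxsum x]
      rw [map_sum, map_sum]
      refine Finset.sum_congr rfl fun i _ => ?_
      rw [map_smul, map_smul]
      exact congrArg (fun t => (b.repr x) i • t) (congrFun heq i)
    exact LinearIsometryEquiv.ext hagree
  -- ### simple reflections
  have hs : ∀ j : ι, ∃ s : E ≃ₗᵢ[ℝ] E, s ∈ weylGroup Δ ∧
      ∀ x, s x = x - (2 * ⟪x, b j⟫_ℝ / ⟪b j, b j⟫_ℝ) • b j := by
    intro j
    obtain ⟨u, hu⟩ := exists_reflection_isometry (b j) (hb0 j)
    exact ⟨u, Subgroup.subset_closure ⟨b j, hbΔ j, hu⟩, hu⟩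
  -- ### conjugation into a (parabolic) dominant chamber
  have hconj : ∀ (S : Finset ι) (ε : ℝ) (χ : E), ∃ u : E ≃ₗᵢ[ℝ] E,
      u ∈ weylGroup Δ ∧ (∀ j ∈ S, 0 ≤ ε * ⟪u χ, b j⟫_ℝ) ∧
      (∀ v : E, (∀ j ∈ S, ⟪v, b j⟫_ℝ = 0) → u v = v) := by
    intro S ε χ
    set δS : E := ∑ j ∈ S, ϖ j with hδS
    have hbδS : ∀ j ∈ S, ⟪b j, δS⟫_ℝ = 1 := by
      intro j hj
      rw [hδS, inner_sum]
      have : ∀ k ∈ S, ⟪b j, ϖ k⟫_ℝ = if j = k then 1 else 0 := by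
        intro k _
        rw [real_inner_comm, hϖb]
      rw [Finset.sum_congr rfl this]
      simp [hj]
    set U : Set (E ≃ₗᵢ[ℝ] E) :=
      {u | u ∈ weylGroup Δ ∧ ∀ v : E, (∀ j ∈ S, ⟪v, b j⟫_ℝ = 0) → u v = v} with hU
    have hUfin : U.Finite := hWfin.subset (fun u hu => hu.1)
    have hU1 : (1 : E ≃ₗᵢ[ℝ] E) ∈ U := ⟨one_mem _, fun v _ => rfl⟩
    obtain ⟨u, huU, humax⟩ := Finset.exists_max_image hUfin.toFinset
      (fun u => ε * ⟪u χ, δS⟫_ℝ) ⟨1, hUfin.mem_toFinset.2 hU1⟩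
    rw [Set.Finite.mem_toFinset] at huU
    refine ⟨u, huU.1, ?_, huU.2⟩
    intro j hj
    by_contra hlt
    push_neg at hlt
    obtain ⟨s, hsW, hs_apply⟩ := hs j
    have hsU : s * u ∈ U := by
      refine ⟨mul_mem hsW huU.1, fun v hv => ?_⟩
      have : (s * u) v = s (u v) := rfl
      rw [this, huU.2 v hv, hs_apply, hv j hj]
      simp
    have hle := humax (s * u) (hUfin.mem_toFinset.2 hsU)
    have happ : (s * u) χ = s (u χ) := rfl
    rw [happ, hs_apply, inner_sub_left, real_inner_smul_left, hbδS j hj, mul_one] at hle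
    have hBpos : 0 < ⟪b j, b j⟫_ℝ := hbb j
    have hc : ε * (2 * ⟪u χ, b j⟫_ℝ / ⟪b j, b j⟫_ℝ) < 0 := by
      have h2 : ε * (2 * ⟪u χ, b j⟫_ℝ / ⟪b j, b j⟫_ℝ)
          = (2 / ⟪b j, b j⟫_ℝ) * (ε * ⟪u χ, b j⟫_ℝ) := by ring
      rw [h2]
      exact mul_neg_of_pos_of_neg (by positivity) hlt
    have : ε * (⟪u χ, δS⟫_ℝ - 2 * ⟪u χ, b j⟫_ℝ / ⟪b j, b j⟫_ℝ)
        = ε * ⟪u χ, δS⟫_ℝ - ε * (2 * ⟪u χ, b j⟫_ℝ / ⟪b j, b j⟫_ℝ) := by ring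
    rw [this] at hle
    linarith
  -- ### the sum of fundamental weights and the longest element
  set δϖ : E := ∑ i, ϖ i with hδϖ
  have hδϖb : ∀ j, ⟪δϖ, b j⟫_ℝ = 1 := by
    intro j
    rw [hδϖ, sum_inner]
    simp only [hϖb]
    simp
  have hδϖb' : ∀ j, ⟪b j, δϖ⟫_ℝ = 1 := fun j => by rw [real_inner_comm]; exact hδϖb j
  have hrootsign : ∀ γ ∈ Δ, (∀ k, 0 ≤ b.repr γ k) ∨ (∀ k, b.repr γ k ≤ 0) := by
    intro γ hγ
    rcases hdecomp γ hγ with ⟨h, -⟩ | ⟨h, -⟩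
    · exact Or.inl (hposrep _ h)
    · refine Or.inr fun k => ?_
      have := hposrep _ h k
      rw [map_neg] at this
      simp only [Finsupp.coe_neg, Pi.neg_apply] at this
      linarith
  have hrootpos : ∀ γ ∈ Δ, (∀ k, 0 ≤ b.repr γ k) → 0 < ⟪γ, δϖ⟫_ℝ := by
    intro γ hγ h
    have hγ0 : γ ≠ 0 := fun h0 => hΔ0 (h0 ▸ hγ)
    have hexp : ⟪γ, δϖ⟫_ℝ = ∑ k, b.repr γ k := by
      rw [hinner_expand]
      exact Finset.sum_congr rfl fun k _ => by rw [hδϖb' k, mul_one]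
    rw [hexp]
    have hne : ∑ k, b.repr γ k ≠ 0 := by
      intro hall0
      have hall := (Finset.sum_eq_zero_iff_of_nonneg (fun k _ => h k)).mp hall0
      apply hγ0
      rw [hxsum γ]
      exact Finset.sum_eq_zero fun k hk => by rw [hall k hk, zero_smul]
    exact lt_of_le_of_ne (Finset.sum_nonneg fun k _ => h k) (Ne.symm hne)
  -- the "longest element" w₀
  obtain ⟨w₀, hw₀W, hw₀anti, hw₀fix⟩ := hconj Finset.univ (-1) δϖ
  have hw₀δ : ∀ j, ⟪w₀ δϖ, b j⟫_ℝ ≤ 0 := by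
    intro j
    have := hw₀anti j (Finset.mem_univ j)
    linarith
  have hN1 : ∀ j k, b.repr (w₀ (b j)) k ≤ 0 := by
    intro j k
    have hβ : w₀ (b j) ∈ Δ := (hWroot w₀ hw₀W).1 _ (hbΔ j)
    rcases hrootsign _ hβ with h | h
    · exfalso
      have h1 : ⟪w₀ (b j), w₀ δϖ⟫_ℝ = 1 := by rw [w₀.inner_map_map]; exact hδϖb' j
      have h2 : ⟪w₀ (b j), w₀ δϖ⟫_ℝ ≤ 0 := by
        rw [hinner_expand]
        apply Finset.sum_nonpos
        intro k _
        have := hw₀δ k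
        have hcom : ⟪b k, w₀ δϖ⟫_ℝ ≤ 0 := by rw [real_inner_comm]; exact this
        nlinarith [h k]
      linarith
    · exact h k
  have hN2 : ∀ j k, b.repr (w₀.symm (b j)) k ≤ 0 := by
    intro j k
    have hβ : w₀.symm (b j) ∈ Δ := (hWroot w₀ hw₀W).2 _ (hbΔ j)
    rcases hrootsign _ hβ with h | h
    · exfalso
      have h1 : ⟪w₀.symm (b j), δϖ⟫_ℝ ≤ 0 := by
        have heq : ⟪w₀ (w₀.symm (b j)), w₀ δϖ⟫_ℝ = ⟪w₀.symm (b j), δϖ⟫_ℝ :=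
          w₀.inner_map_map _ _
        rw [← heq, w₀.apply_symm_apply]
        rw [real_inner_comm]
        exact hw₀δ j
      have h2 : 0 < ⟪w₀.symm (b j), δϖ⟫_ℝ := hrootpos _ hβ h
      linarith
    · exact h k
  -- ### the sign lemmas
  have hsignP : ∀ (χ : E) (w : E ≃ₗᵢ[ℝ] E), w ∈ weylGroup Δ → ∀ i, 0 ≤ ⟪χ, w (ϖ i)⟫_ℝ →
      ∃ w' : E ≃ₗᵢ[ℝ] E, w' ∈ weylGroup Δ ∧ (∀ k, 0 ≤ ⟪χ, w' (ϖ k)⟫_ℝ) ∧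
        ∀ x : E, (∀ k, 0 ≤ ⟪x, w' (ϖ k)⟫_ℝ) → 0 ≤ ⟪x, w (ϖ i)⟫_ℝ := by
    intro χ w hwW i hi
    obtain ⟨u, huW, hudom, hufix⟩ := hconj (Finset.univ.erase i) 1 (w.symm χ)
    have huϖ : u (ϖ i) = ϖ i := by
      refine hufix (ϖ i) (fun j hj => ?_)
      rw [hϖb]
      rw [if_neg (Finset.ne_of_mem_erase hj)]
    have huϖ' : u.symm (ϖ i) = ϖ i := by
      conv_lhs => rw [← huϖ]
      rw [u.symm_apply_apply]
    set χ' : E := u (w.symm χ) with hχ'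
    have hti : ⟪ϖ i, χ'⟫_ℝ = ⟪χ, w (ϖ i)⟫_ℝ := by
      rw [real_inner_comm, hχ']
      calc ⟪u (w.symm χ), ϖ i⟫_ℝ = ⟪u (w.symm χ), u (u.symm (ϖ i))⟫_ℝ := by
            rw [u.apply_symm_apply]
        _ = ⟪w.symm χ, u.symm (ϖ i)⟫_ℝ := u.inner_map_map _ _
        _ = ⟪w.symm χ, ϖ i⟫_ℝ := by rw [huϖ']
        _ = ⟪w (w.symm χ), w (ϖ i)⟫_ℝ := (w.inner_map_map _ _).symm
        _ = ⟪χ, w (ϖ i)⟫_ℝ := by rw [w.apply_symm_apply]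
    set t : ℝ := ⟪ϖ i, χ'⟫_ℝ / ⟪ϖ i, ϖ i⟫_ℝ with ht
    have ht0 : 0 ≤ t := div_nonneg (by rw [hti]; exact hi) (le_of_lt (hϖ0 i))
    set μ : E := χ' - t • ϖ i with hμ
    have hμi : b.repr μ i = 0 := by
      rw [← hϖ, hμ, inner_sub_right, real_inner_smul_right, ht,
        div_mul_cancel₀ _ (ne_of_gt (hϖ0 i)), sub_self]
    have hμk : ∀ k, 0 ≤ b.repr μ k := by
      apply hL4
      intro j hj
      rcases eq_or_ne j i with rfl | hne
      · exact absurd hμi hj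
      · rw [hμ, inner_sub_left, real_inner_smul_left]
        have hz : ⟪ϖ i, b j⟫_ℝ = 0 := by rw [hϖb, if_neg hne]
        rw [hz, mul_zero, sub_zero]
        have := hudom j (Finset.mem_erase.2 ⟨hne, Finset.mem_univ j⟩)
        rw [one_mul] at this
        exact this
    have hχ'A : ∀ k, 0 ≤ b.repr χ' k := by
      intro k
      have hsplit : χ' = μ + t • ϖ i := by rw [hμ]; abel
      have : b.repr χ' k = t * ⟪ϖ k, ϖ i⟫_ℝ + b.repr μ k := by
        rw [← hϖ, hsplit, inner_add_right, real_inner_smul_right, hϖ]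
        ring
      rw [this]
      exact add_nonneg (mul_nonneg ht0 (hϖϖ k i)) (hμk k)
    refine ⟨w * u⁻¹, mul_mem hwW (inv_mem huW), ?_, ?_⟩
    · intro k
      rw [hpair]
      have hws : (w * u⁻¹).symm χ = χ' := by
        refine (w * u⁻¹).injective ?_
        rw [(w * u⁻¹).apply_symm_apply]
        show χ = w (u⁻¹ χ')
        rw [LinearIsometryEquiv.inv_def, hχ', u.symm_apply_apply, w.apply_symm_apply]
      rw [hws]
      exact hχ'A k
    · intro x hx
      have hwi : (w * u⁻¹) (ϖ i) = w (ϖ i) := by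
        show w (u⁻¹ (ϖ i)) = w (ϖ i)
        rw [LinearIsometryEquiv.inv_def, huϖ']
      have := hx i
      rw [hwi] at this
      exact this
  have hsignN : ∀ (χ : E) (w : E ≃ₗᵢ[ℝ] E), w ∈ weylGroup Δ → ∀ i, ⟪χ, w (ϖ i)⟫_ℝ ≤ 0 →
      ∃ w' : E ≃ₗᵢ[ℝ] E, w' ∈ weylGroup Δ ∧ (∀ k, 0 ≤ ⟪χ, w' (ϖ k)⟫_ℝ) ∧
        ∀ x : E, (∀ k, 0 ≤ ⟪x, w' (ϖ k)⟫_ℝ) → ⟪x, w (ϖ i)⟫_ℝ ≤ 0 := by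
    intro χ w hwW i hi
    obtain ⟨u, huW, hudom, hufix⟩ := hconj (Finset.univ.erase i) (-1) (w.symm χ)
    have huϖ : u (ϖ i) = ϖ i := by
      refine hufix (ϖ i) (fun j hj => ?_)
      rw [hϖb]
      rw [if_neg (Finset.ne_of_mem_erase hj)]
    have huϖ' : u.symm (ϖ i) = ϖ i := by
      conv_lhs => rw [← huϖ]
      rw [u.symm_apply_apply]
    set χ' : E := u (w.symm χ) with hχ'
    have hti : ⟪ϖ i, χ'⟫_ℝ = ⟪χ, w (ϖ i)⟫_ℝ := by
      rw [real_inner_comm, hχ']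
      calc ⟪u (w.symm χ), ϖ i⟫_ℝ = ⟪u (w.symm χ), u (u.symm (ϖ i))⟫_ℝ := by
            rw [u.apply_symm_apply]
        _ = ⟪w.symm χ, u.symm (ϖ i)⟫_ℝ := u.inner_map_map _ _
        _ = ⟪w.symm χ, ϖ i⟫_ℝ := by rw [huϖ']
        _ = ⟪w (w.symm χ), w (ϖ i)⟫_ℝ := (w.inner_map_map _ _).symm
        _ = ⟪χ, w (ϖ i)⟫_ℝ := by rw [w.apply_symm_apply]
    set t : ℝ := ⟪ϖ i, χ'⟫_ℝ / ⟪ϖ i, ϖ i⟫_ℝ with ht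
    have ht0 : t ≤ 0 := div_nonpos_of_nonpos_of_nonneg (by rw [hti]; exact hi)
      (le_of_lt (hϖ0 i))
    set μ : E := χ' - t • ϖ i with hμ
    have hμi : b.repr μ i = 0 := by
      rw [← hϖ, hμ, inner_sub_right, real_inner_smul_right, ht,
        div_mul_cancel₀ _ (ne_of_gt (hϖ0 i)), sub_self]
    have hμk : ∀ k, b.repr μ k ≤ 0 := by
      intro k
      have hneg' := hL4 (-μ) ?_ k
      · rw [map_neg] at hneg'
        simp only [Finsupp.coe_neg, Pi.neg_apply] at hneg'
        linarith
      · intro j hj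
        rcases eq_or_ne j i with rfl | hne
        · exfalso
          apply hj
          rw [map_neg]
          simp only [Finsupp.coe_neg, Pi.neg_apply]
          rw [hμi, neg_zero]
        · rw [inner_neg_left, hμ, inner_sub_left, real_inner_smul_left]
          have hz : ⟪ϖ i, b j⟫_ℝ = 0 := by rw [hϖb, if_neg hne]
          rw [hz, mul_zero, sub_zero]
          have := hudom j (Finset.mem_erase.2 ⟨hne, Finset.mem_univ j⟩)
          linarith
    have hχ'A : ∀ k, b.repr χ' k ≤ 0 := by
      intro k
      have hsplit : χ' = μ + t • ϖ i := by rw [hμ]; abel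
      have hh : b.repr χ' k = t * ⟪ϖ k, ϖ i⟫_ℝ + b.repr μ k := by
        rw [← hϖ, hsplit, inner_add_right, real_inner_smul_right, hϖ]
        ring
      rw [hh]
      have : t * ⟪ϖ k, ϖ i⟫_ℝ ≤ 0 := mul_nonpos_iff.2 (Or.inr ⟨ht0, hϖϖ k i⟩)
      linarith [hμk k]
    refine ⟨w * u⁻¹ * w₀⁻¹, mul_mem (mul_mem hwW (inv_mem huW)) (inv_mem hw₀W), ?_, ?_⟩
    · intro k
      rw [hpair]
      have hws : (w * u⁻¹ * w₀⁻¹).symm χ = w₀ χ' := by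
        refine (w * u⁻¹ * w₀⁻¹).injective ?_
        rw [(w * u⁻¹ * w₀⁻¹).apply_symm_apply]
        show χ = w (u⁻¹ (w₀⁻¹ (w₀ χ')))
        rw [LinearIsometryEquiv.inv_def, LinearIsometryEquiv.inv_def, w₀.symm_apply_apply,
          hχ', u.symm_apply_apply, w.apply_symm_apply]
      rw [hws]
      -- 0 ≤ b.repr (w₀ χ') k
      have hexp : b.repr (w₀ χ') k = ∑ j, b.repr χ' j * b.repr (w₀ (b j)) k := by
        rw [← hϖ]
        conv_lhs => rw [hxsum χ']
        rw [map_sum, inner_sum]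
        refine Finset.sum_congr rfl fun j _ => ?_
        rw [map_smul, real_inner_smul_right, hϖ]
      rw [hexp]
      apply Finset.sum_nonneg
      intro j _
      nlinarith [hχ'A j, hN1 j k]
    · intro x hx
      -- ⟪x, w (ϖ i)⟫ ≤ 0
      set y : E := (w * u⁻¹ * w₀⁻¹).symm x with hy
      have hyk : ∀ k, 0 ≤ b.repr y k := by
        intro k
        have := hx k
        rw [hpair] at this
        exact this
      have hxw : ⟪x, w (ϖ i)⟫_ℝ = ⟪y, w₀ (ϖ i)⟫_ℝ := by
        have h1 : ⟪x, w (ϖ i)⟫_ℝ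
            = ⟪(w * u⁻¹ * w₀⁻¹).symm x, (w * u⁻¹ * w₀⁻¹).symm (w (ϖ i))⟫_ℝ :=
          ((w * u⁻¹ * w₀⁻¹).symm.inner_map_map x (w (ϖ i))).symm
        have h2 : (w * u⁻¹ * w₀⁻¹).symm (w (ϖ i)) = w₀ (ϖ i) := by
          refine (w * u⁻¹ * w₀⁻¹).injective ?_
          rw [(w * u⁻¹ * w₀⁻¹).apply_symm_apply]
          show w (ϖ i) = w (u⁻¹ (w₀⁻¹ (w₀ (ϖ i))))
          rw [LinearIsometryEquiv.inv_def, LinearIsometryEquiv.inv_def, w₀.symm_apply_apply,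
            huϖ']
        rw [h1, h2, hy]
      rw [hxw, hinner_expand]
      apply Finset.sum_nonpos
      intro j _
      have hj : ⟪b j, w₀ (ϖ i)⟫_ℝ ≤ 0 := by
        have h3 : ⟪b j, w₀ (ϖ i)⟫_ℝ = ⟪w₀.symm (b j), ϖ i⟫_ℝ := by
          rw [← w₀.inner_map_map (w₀.symm (b j)) (ϖ i), w₀.apply_symm_apply]
        rw [h3, real_inner_comm, hϖ]
        exact hN2 j i
      exact mul_nonpos_iff.2 (Or.inl ⟨hyk j, hj⟩)
  -- ### halfspace helpers
  have hhalfclosed : ∀ v : E, IsClosed {x : E | 0 ≤ ⟪x, v⟫_ℝ} :=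
    fun v => isClosed_le continuous_const (Continuous.inner continuous_id continuous_const)
  have hhalfconvex : ∀ v : E, Convex ℝ {x : E | 0 ≤ ⟪x, v⟫_ℝ} := by
    intro v x hx y hy a c ha hc _
    simp only [Set.mem_setOf_eq, inner_add_left, real_inner_smul_left] at *
    have h1 : 0 ≤ a * ⟪x, v⟫_ℝ := mul_nonneg ha hx
    have h2 : 0 ≤ c * ⟪y, v⟫_ℝ := mul_nonneg hc hy
    linarith
  -- σ χ as an intersection of halfspaces
  have hσset : ∀ χ : E, σ χ = {x : E | ∀ i, 0 ≤ ⟪x, b i⟫_ℝ} ∩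
      ⋂ w ∈ {w : E ≃ₗᵢ[ℝ] E | w ∈ weylGroup Δ ∧ ∀ i, 0 ≤ ⟪χ, w (ϖ i)⟫_ℝ},
        ⋂ i, {x : E | 0 ≤ ⟪x, w (ϖ i)⟫_ℝ} := by
    intro χ
    ext x
    rw [hmemσ]
    simp only [Set.mem_inter_iff, Set.mem_setOf_eq, Set.mem_iInter]
    constructor
    · rintro ⟨h1, h2⟩
      exact ⟨h1, fun w hw i => h2 w hw.1 hw.2 i⟩
    · rintro ⟨h1, h2⟩
      exact ⟨h1, fun w hw hχ i => h2 w ⟨hw, hχ⟩ i⟩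
  refine ⟨⟨?_, ?_⟩, ?_, ?_⟩
  -- ### (a) finiteness
  · have hsub : {s : Set E | ∃ χ ∈ C0, s = σ χ} ⊆
        (fun T : Set (E ≃ₗᵢ[ℝ] E) => C ∩ ⋂ w ∈ T, ⇑w '' A) ''
          {T | T ⊆ {w : E ≃ₗᵢ[ℝ] E | w ∈ weylGroup Δ}} := by
      rintro s ⟨χ, _, rfl⟩
      exact ⟨{w : E ≃ₗᵢ[ℝ] E | w ∈ weylGroup Δ ∧ χ ∈ ⇑w '' A},
        fun w hw => hw.1, (hσ χ).symm⟩
    exact Set.Finite.subset (Set.Finite.image _ hWfin.finite_subsets) hsub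
  -- ### (a) closed convex cones
  · intro χ _
    refine ⟨?_, ?_, ?_⟩
    · rw [hσset χ]
      apply IsClosed.inter
      · have : {x : E | ∀ i, 0 ≤ ⟪x, b i⟫_ℝ} = ⋂ i, {x : E | 0 ≤ ⟪x, b i⟫_ℝ} := by
          ext x; simp [Set.mem_iInter]
        rw [this]
        exact isClosed_iInter fun i => hhalfclosed _
      · exact isClosed_biInter fun w _ => isClosed_iInter fun i => hhalfclosed _
    · rw [hσset χ]
      apply Convex.inter
      · have : {x : E | ∀ i, 0 ≤ ⟪x, b i⟫_ℝ} = ⋂ i, {x : E | 0 ≤ ⟪x, b i⟫_ℝ} := by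
          ext x; simp [Set.mem_iInter]
        rw [this]
        exact convex_iInter fun i => hhalfconvex _
      · exact convex_iInter₂ fun w _ => convex_iInter fun i => hhalfconvex _
    · intro t htt x hx
      rw [hmemσ] at hx ⊢
      refine ⟨fun i => ?_, fun w hw hdom i => ?_⟩
      · rw [real_inner_smul_left]
        exact mul_nonneg htt (hx.1 i)
      · rw [real_inner_smul_left]
        exact mul_nonneg htt (hx.2 w hw hdom i)
  -- ### (b) the union is C
  · apply Set.eq_of_subset_of_subset
    · intro lam hlam
      rw [Set.mem_iUnion₂] at hlam
      obtain ⟨χ, _, hmem⟩ := hlam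
      rw [hC]
      exact ((hmemσ χ lam).1 hmem).1
    · intro lam hlam
      have hlamC : ∀ i, 0 ≤ ⟪lam, b i⟫_ℝ := by rw [hC] at hlam; exact hlam
      set f : (E ≃ₗᵢ[ℝ] E) × ι → ℝ := fun p =>
        if ⟪lam, p.1 (ϖ p.2)⟫_ℝ < 0 then
          -⟪lam, p.1 (ϖ p.2)⟫_ℝ / max 1 ⟪δϖ, p.1 (ϖ p.2)⟫_ℝ else 1 with hf
      set F : Finset ℝ :=
        insert 1 ((hWfin.toFinset ×ˢ (Finset.univ : Finset ι)).image f) with hF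
      have hFne : F.Nonempty := ⟨1, Finset.mem_insert_self _ _⟩
      have hFpos : ∀ r ∈ F, 0 < r := by
        intro r hr
        rw [hF, Finset.mem_insert] at hr
        rcases hr with rfl | hr
        · exact one_pos
        · obtain ⟨p, _, rfl⟩ := Finset.mem_image.1 hr
          rw [hf]
          dsimp only
          split_ifs with h
          · apply div_pos (by linarith)
            exact lt_of_lt_of_le one_pos (le_max_left _ _)
          · exact one_pos
      set t : ℝ := F.min' hFne / 2 with htdef
      have htpos : 0 < t := half_pos (hFpos _ (F.min'_mem hFne))
      have hkey : ∀ w : E ≃ₗᵢ[ℝ] E, w ∈ weylGroup Δ → ∀ i,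
          ⟪lam, w (ϖ i)⟫_ℝ < 0 → ⟪lam + t • δϖ, w (ϖ i)⟫_ℝ < 0 := by
        intro w hw i hneg'
        have hmem : f (w, i) ∈ F := Finset.mem_insert_of_mem
          (Finset.mem_image_of_mem f (Finset.mem_product.2
            ⟨hWfin.mem_toFinset.2 hw, Finset.mem_univ i⟩))
        have htle : t < f (w, i) := by
          have h1 : t < F.min' hFne := by
            rw [htdef]
            exact half_lt_self (hFpos _ (F.min'_mem hFne))
          exact lt_of_lt_of_le h1 (F.min'_le _ hmem)
        rw [hf] at htle
        dsimp only at htle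
        rw [if_pos hneg'] at htle
        rw [inner_add_left, real_inner_smul_left]
        have hM : (0:ℝ) < max 1 ⟪δϖ, w (ϖ i)⟫_ℝ :=
          lt_of_lt_of_le one_pos (le_max_left _ _)
        have h1 : t * max 1 ⟪δϖ, w (ϖ i)⟫_ℝ < -⟪lam, w (ϖ i)⟫_ℝ :=
          (lt_div_iff₀ hM).mp htle
        have h2 : t * ⟪δϖ, w (ϖ i)⟫_ℝ ≤ t * max 1 ⟪δϖ, w (ϖ i)⟫_ℝ :=
          mul_le_mul_of_nonneg_left (le_max_right _ _) htpos.le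
        linarith
      rw [Set.mem_iUnion₂]
      refine ⟨lam + t • δϖ, ?_, ?_⟩
      · rw [hC0]
        intro i
        rw [inner_add_left, real_inner_smul_left, hδϖb i, mul_one]
        have := hlamC i
        linarith
      · rw [hmemσ]
        refine ⟨hlamC, fun w hw hdom i => ?_⟩
        by_contra hcon
        push_neg at hcon
        exact absurd (hdom i) (not_le.2 (hkey w hw i hcon))
  -- ### (c) faces
  · intro χ₁ _ χ₂ _ p hp x hxσ y hyσ t ht0 ht1 hpt
    obtain ⟨hp1, hp2⟩ := hp
    have hx := (hmemσ χ₁ x).1 hxσ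
    have hy := (hmemσ χ₁ y).1 hyσ
    have hp2' := (hmemσ χ₂ p).1 hp2
    have key : ∀ w : E ≃ₗᵢ[ℝ] E, w ∈ weylGroup Δ → (∀ k, 0 ≤ ⟪χ₂, w (ϖ k)⟫_ℝ) →
        ∀ i, 0 ≤ ⟪x, w (ϖ i)⟫_ℝ ∧ 0 ≤ ⟪y, w (ϖ i)⟫_ℝ := by
      intro w hw hdom i
      rcases le_or_gt 0 ⟪χ₁, w (ϖ i)⟫_ℝ with h | h
      · obtain ⟨w', hw'W, hw'dom, hw'concl⟩ := hsignP χ₁ w hw i h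
        exact ⟨hw'concl x (hx.2 w' hw'W hw'dom), hw'concl y (hy.2 w' hw'W hw'dom)⟩
      · obtain ⟨w', hw'W, hw'dom, hw'concl⟩ := hsignN χ₁ w hw i h.le
        have hxn : ⟪x, w (ϖ i)⟫_ℝ ≤ 0 := hw'concl x (hx.2 w' hw'W hw'dom)
        have hyn : ⟪y, w (ϖ i)⟫_ℝ ≤ 0 := hw'concl y (hy.2 w' hw'W hw'dom)
        have hpnn : 0 ≤ ⟪p, w (ϖ i)⟫_ℝ := hp2'.2 w hw hdom i
        rw [hpt, inner_add_left, real_inner_smul_left, real_inner_smul_left] at hpnn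
        have hxle : t * ⟪x, w (ϖ i)⟫_ℝ ≤ 0 :=
          mul_nonpos_iff.2 (Or.inl ⟨ht0.le, hxn⟩)
        have hyle : (1 - t) * ⟪y, w (ϖ i)⟫_ℝ ≤ 0 :=
          mul_nonpos_iff.2 (Or.inl ⟨by linarith, hyn⟩)
        constructor
        · nlinarith
        · nlinarith
    constructor
    · refine ⟨hxσ, ?_⟩
      rw [hmemσ]
      exact ⟨hx.1, fun w hw hdom i => (key w hw hdom i).1⟩
    · refine ⟨hyσ, ?_⟩
      rw [hmemσ]
      exact ⟨hy.1, fun w hw hdom i => (key w hw hdom i).2⟩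
end

section
/- Assume that (π_i, π_j) ≥ 0 for all i, j, and that (π_i, π_i) ≥ (α_i, α_i)/2 for every simple root α_i (this inequality holds for every root system with no irreducible component of type A_n). Let μ = −Σ_i c_i π_i with all c_i > 0 (a strictly antidominant vector), let λ = Σ_i a_i π_i with all a_i ≥ 0 (a dominant vector), and let α be a simple root. Then (s_α μ, λ) ≤ 0, where s_α(x) = x − (2(x, α)/(α, α))·α. (In the paper's formulation: if G has no simple factors of type A_n, then s_α w₀ ∈ W^{st}_χ for every strictly dominant weight χ, where μ = w₀χ.) -/
open InnerProductSpace

/-- Lemma 1.10 of the paper, computational form.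
Assume `(πᵢ, πⱼ) ≥ 0` for all `i, j` and `(πᵢ, πᵢ) ≥ (αᵢ, αᵢ)/2` for every simple
root `αᵢ` (true for root systems with no component of type `Aₙ`), where the
fundamental weights satisfy `(πᵢ, αⱼ) = δᵢⱼ (αⱼ, αⱼ)/2`.  If `μ = -Σ cᵢ πᵢ` with all
`cᵢ > 0` (strictly antidominant), `λ = Σ aᵢ πᵢ` with all `aᵢ ≥ 0` (dominant) and `α`
is a simple root, then `(s_α μ, λ) ≤ 0`. -/
theorem reflection_of_antidominant_pairs_nonpositive {E : Type*} [NormedAddCommGroup E]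
    [InnerProductSpace ℝ E]
    {ι : Type*} [Fintype ι] [DecidableEq ι]
    (α π : ι → E)
    (hπα : ∀ i j, ⟪π i, α j⟫_ℝ = if i = j then ⟪α j, α j⟫_ℝ / 2 else 0)
    (hππ : ∀ i j, 0 ≤ ⟪π i, π j⟫_ℝ)
    (hbig : ∀ i, ⟪α i, α i⟫_ℝ / 2 ≤ ⟪π i, π i⟫_ℝ)
    (c a : ι → ℝ) (hc : ∀ i, 0 < c i) (ha : ∀ i, 0 ≤ a i)
    (μ lam : E) (hμ : μ = -∑ i, c i • π i) (hlam : lam = ∑ i, a i • π i)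
    (i₀ : ι) :
    ⟪μ - (2 * ⟪μ, α i₀⟫_ℝ / ⟪α i₀, α i₀⟫_ℝ) • α i₀, lam⟫_ℝ ≤ 0 := by
  set K := ⟪α i₀, α i₀⟫_ℝ with hK
  have hμα : ⟪μ, α i₀⟫_ℝ = -(c i₀ * (K / 2)) := by
    rw [hμ, inner_neg_left, sum_inner]
    simp [real_inner_smul_left, hπα, mul_ite, mul_zero]
    left; rw [hK, real_inner_self_eq_norm_sq]
  have hαlam : ⟪α i₀, lam⟫_ℝ = a i₀ * (K / 2) := by
    rw [hlam, inner_sum]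
    simp only [real_inner_smul_right]
    have : ∀ j, ⟪α i₀, π j⟫_ℝ = if j = i₀ then K / 2 else 0 := by
      intro j
      rw [real_inner_comm, hπα]
    simp [this, mul_ite, mul_zero]
  have hμlam : ⟪μ, lam⟫_ℝ = -∑ i, ∑ j, c i * (a j * ⟪π i, π j⟫_ℝ) := by
    rw [hμ, hlam, inner_neg_left, sum_inner]
    congr 1
    refine Finset.sum_congr rfl fun i _ => ?_
    rw [real_inner_smul_left, inner_sum]
    simp only [real_inner_smul_right]
    rw [Finset.mul_sum]
  have hS : c i₀ * (a i₀ * (K / 2)) ≤ ∑ i, ∑ j, c i * (a j * ⟪π i, π j⟫_ℝ) := by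
    have h1 : c i₀ * (a i₀ * (K / 2)) ≤ c i₀ * (a i₀ * ⟪π i₀, π i₀⟫_ℝ) := by
      have h := hbig i₀
      rw [← hK] at h
      nlinarith [(hc i₀).le, ha i₀, mul_nonneg (hc i₀).le (ha i₀)]
    refine h1.trans ?_
    have h2 : c i₀ * (a i₀ * ⟪π i₀, π i₀⟫_ℝ) ≤ ∑ j, c i₀ * (a j * ⟪π i₀, π j⟫_ℝ) :=
      Finset.single_le_sum (f := fun j => c i₀ * (a j * ⟪π i₀, π j⟫_ℝ))
        (fun j _ => mul_nonneg (hc i₀).le (mul_nonneg (ha j) (hππ i₀ j)))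
        (Finset.mem_univ i₀)
    refine h2.trans ?_
    exact Finset.single_le_sum (f := fun i => ∑ j, c i * (a j * ⟪π i, π j⟫_ℝ))
      (fun i _ => Finset.sum_nonneg fun j _ =>
        mul_nonneg (hc i).le (mul_nonneg (ha j) (hππ i j)))
      (Finset.mem_univ i₀)
  rw [inner_sub_left, real_inner_smul_left, hμα, hαlam, hμlam]
  rcases eq_or_ne K 0 with h0 | h0
  · rw [h0]
    simp only [div_zero, zero_mul, mul_zero, neg_zero, sub_zero]
    have := hS
    rw [h0] at this
    linarith [this]
  · have : 2 * -(c i₀ * (K / 2)) / K = -(c i₀) := by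
      field_simp
    rw [this]
    have : -(c i₀) * (a i₀ * (K / 2)) = -(c i₀ * (a i₀ * (K / 2))) := by ring
    linarith [hS]
end

section
/- (Counterexample for type A₂.) In ℝ³ with the standard inner product, let π₁ = (2/3, −1/3, −1/3) and π₂ = (1/3, 1/3, −2/3) (the fundamental weights of the root system A₂ with simple roots α₁ = e₁ − e₂, α₂ = e₂ − e₃), let w₀ : (x₁, x₂, x₃) ↦ (x₃, x₂, x₁) be the longest Weyl group element and s₂ : (x₁, x₂, x₃) ↦ (x₁, x₃, x₂) the reflection in α₂. For real numbers a > b > 0 set χ = a·π₁ + b·π₂. Then (s₂(w₀(χ)), π₂) = (a − b)/3 > 0. (Hence for type A₂ the element s_{α₂}w₀ is not χ-semistable, so the conclusion of Lemma 1.10 fails for groups with simple factors of type A_n.) -/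
/-- Counterexample for type `A₂`, Example 1.14 of the paper.
In `ℝ³` with the standard inner product, with fundamental weights
`π₁ = (2/3, -1/3, -1/3)`, `π₂ = (1/3, 1/3, -2/3)` of the root system `A₂`, longest
element `w₀ : (x₁,x₂,x₃) ↦ (x₃,x₂,x₁)` and reflection `s₂ : (x₁,x₂,x₃) ↦ (x₁,x₃,x₂)`:
for `a > b > 0` and `χ = a·π₁ + b·π₂` one has `(s₂(w₀(χ)), π₂) = (a-b)/3 > 0`. -/
theorem counterexample_A2 (a b : ℝ) (hab : b < a) (hb : 0 < b)
    (π₁ π₂ : Fin 3 → ℝ)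
    (hπ₁ : π₁ = ![2/3, -1/3, -1/3]) (hπ₂ : π₂ = ![1/3, 1/3, -2/3])
    (w₀ s₂ : (Fin 3 → ℝ) → (Fin 3 → ℝ))
    (hw₀ : ∀ x, w₀ x = ![x 2, x 1, x 0]) (hs₂ : ∀ x, s₂ x = ![x 0, x 2, x 1])
    (χ : Fin 3 → ℝ) (hχ : χ = a • π₁ + b • π₂) :
    (∑ i, s₂ (w₀ χ) i * π₂ i) = (a - b) / 3 ∧ 0 < (a - b) / 3 := by
  subst hπ₁ hπ₂ hχ
  constructor
  · simp [hs₂, hw₀, Fin.sum_univ_three]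
    ring
  · linarith
end

section
/- Assume that (π_i, π_j) ≥ 0 for all i, j. For ξ ∈ E let H_ξ = {x ∈ E : (π_j, x) ≥ (π_j, ξ) for all j} (this equals ξ + A). Let ν ∈ E satisfy −ν = Σ_i c_i α_i with all c_i ≥ 0, and let λ = Σ_i b_i π_i with all b_i ≥ 0 and λ ≠ 0. Then there exists t* ≥ 0 such that −t*·λ ∈ H_ν while −t·λ ∉ H_ν for every t > t*; that is, the ray {−t·λ : t ≥ 0} emanating from 0 meets the boundary of the cone H_ν. Moreover, for any μ ∈ E with ν − μ = Σ_i d_i α_i, d_i ≥ 0, the boundary point −t*·λ also lies in H_μ. (In the paper: ν = ww₀χ and μ = w₀χ, so every ray from 0 inside −C meets the boundary of H_{ww₀χ} at a point of the weight polytope of V(χ).) -/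
open InnerProductSpace

/-- Proposition 2.4 of the paper, computational form.
Assume `(πᵢ, πⱼ) ≥ 0` for all `i, j`, where the simple roots `b i` form a basis and
the fundamental weights satisfy `(πᵢ, bⱼ) = δᵢⱼ (bⱼ, bⱼ)/2`.  For `ξ ∈ E` let
`H_ξ = {x : (πⱼ, x) ≥ (πⱼ, ξ) ∀ j}` (`= ξ + A`).  If `-ν = Σ cᵢ bᵢ` with `cᵢ ≥ 0` and
`λ = Σ bbᵢ πᵢ` with `bbᵢ ≥ 0`, `λ ≠ 0`, then there is `t* ≥ 0` with `-t*·λ ∈ H_ν` and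
`-t·λ ∉ H_ν` for all `t > t*`; i.e. the ray `{-t·λ : t ≥ 0}` meets the boundary of
`H_ν`.  Moreover for any `μ` with `ν - μ = Σ dᵢ bᵢ`, `dᵢ ≥ 0`, also `-t*·λ ∈ H_μ`. -/
theorem ray_meets_boundary_of_cone {E : Type*} [NormedAddCommGroup E]
    [InnerProductSpace ℝ E] [FiniteDimensional ℝ E]
    {ι : Type*} [Fintype ι] [DecidableEq ι]
    (b : Module.Basis ι ℝ E) (π : ι → E)
    (hπb : ∀ i j, ⟪π i, b j⟫_ℝ = if i = j then ⟪b j, b j⟫_ℝ / 2 else 0)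
    (hππ : ∀ i j, 0 ≤ ⟪π i, π j⟫_ℝ)
    (ν : E) (c : ι → ℝ) (hc : ∀ i, 0 ≤ c i) (hν : -ν = ∑ i, c i • b i)
    (lam : E) (bb : ι → ℝ) (hbb : ∀ i, 0 ≤ bb i) (hlam : lam = ∑ i, bb i • π i)
    (hlam0 : lam ≠ 0) :
    ∃ tstar : ℝ, 0 ≤ tstar ∧
      (∀ j, ⟪π j, ν⟫_ℝ ≤ ⟪π j, -tstar • lam⟫_ℝ) ∧
      (∀ t : ℝ, tstar < t → ¬ (∀ j, ⟪π j, ν⟫_ℝ ≤ ⟪π j, -t • lam⟫_ℝ)) ∧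
      (∀ μ : E, ∀ d : ι → ℝ, (∀ i, 0 ≤ d i) → ν - μ = ∑ i, d i • b i →
        ∀ j, ⟪π j, μ⟫_ℝ ≤ ⟪π j, -tstar • lam⟫_ℝ) := by

  classical
  set A : ι → ℝ := fun j => ⟪π j, lam⟫_ℝ with hA
  have hAnn : ∀ j, 0 ≤ A j := by
    intro j
    have : A j = ∑ i, bb i * ⟪π j, π i⟫_ℝ := by
      simp only [hA, hlam, inner_sum, real_inner_smul_right]
    rw [this]
    exact Finset.sum_nonneg fun i _ => mul_nonneg (hbb i) (hππ j i)
  set B : ι → ℝ := fun j => c j * (⟪b j, b j⟫_ℝ / 2) with hB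
  have hsum : ∀ (x : E) (e : ι → ℝ), x = ∑ i, e i • b i →
      ∀ j, ⟪π j, x⟫_ℝ = e j * (⟪b j, b j⟫_ℝ / 2) := by
    intro x e hx j
    rw [hx, inner_sum, Finset.sum_eq_single j]
    · rw [real_inner_smul_right, hπb]; simp
    · intro i _ hij
      rw [real_inner_smul_right, hπb]
      simp [Ne.symm hij]
    · simp
  have hBnn : ∀ j, 0 ≤ B j := fun j =>
    mul_nonneg (hc j) (div_nonneg real_inner_self_nonneg (by norm_num))
  have hν' : ∀ j, ⟪π j, ν⟫_ℝ = -B j := by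
    intro j
    have h1 : ⟪π j, -ν⟫_ℝ = B j := hsum (-ν) c hν j
    rw [inner_neg_right] at h1
    linarith
  have hex : ∃ j, 0 < A j := by
    by_contra h
    push_neg at h
    have hA0 : ∀ j, A j = 0 := fun j => le_antisymm (h j) (hAnn j)
    have hll : ⟪lam, lam⟫_ℝ = 0 := by
      nth_rewrite 1 [hlam]
      rw [sum_inner]
      refine Finset.sum_eq_zero fun i _ => ?_
      rw [real_inner_smul_left]
      have : ⟪π i, lam⟫_ℝ = 0 := hA0 i
      rw [this, mul_zero]
    exact hlam0 (by rwa [inner_self_eq_zero] at hll)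
  set S : Finset ι := Finset.univ.filter fun j => 0 < A j with hSdef
  have hS : S.Nonempty := ⟨hex.choose, by simp [hSdef, hex.choose_spec]⟩
  have hmemS : ∀ j, j ∈ S → 0 < A j := by
    intro j hj; simpa [hSdef] using hj
  set tstar := S.inf' hS (fun j => B j / A j) with htdef
  have htnn : 0 ≤ tstar :=
    Finset.le_inf' hS _ fun j hj => div_nonneg (hBnn j) (hmemS j hj).le
  have hkey : ∀ (t : ℝ) (j : ι),
      (⟪π j, ν⟫_ℝ ≤ ⟪π j, -t • lam⟫_ℝ) ↔ t * A j ≤ B j := by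
    intro t j
    have h2 : ⟪π j, -t • lam⟫_ℝ = -t * A j := by
      rw [real_inner_smul_right]
    rw [hν' j, h2]
    constructor <;> intro h <;> linarith
  refine ⟨tstar, htnn, ?_, ?_, ?_⟩
  · intro j
    rw [hkey]
    rcases lt_or_eq_of_le (hAnn j) with hpos | hzero
    · have hjS : j ∈ S := by simp [hSdef, hpos]
      have : tstar ≤ B j / A j := Finset.inf'_le _ hjS
      calc tstar * A j ≤ (B j / A j) * A j := by
            exact mul_le_mul_of_nonneg_right this hpos.le
        _ = B j := by field_simp
    · rw [← hzero, mul_zero]; exact hBnn j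
  · intro t ht hall
    obtain ⟨j, hjS, hje⟩ := Finset.exists_mem_eq_inf' hS (fun j => B j / A j)
    have hAj : 0 < A j := hmemS j hjS
    have h1 : t * A j ≤ B j := (hkey t j).mp (hall j)
    have h2 : B j / A j < t := by rw [← hje]; exact ht
    have h3 : B j < t * A j := (div_lt_iff₀ hAj).mp h2
    linarith
  · intro μ d hd hμ j
    have h1 : ⟪π j, ν - μ⟫_ℝ = d j * (⟪b j, b j⟫_ℝ / 2) := hsum _ d hμ j
    rw [inner_sub_right] at h1
    have h2 : 0 ≤ d j * (⟪b j, b j⟫_ℝ / 2) :=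
      mul_nonneg (hd j) (div_nonneg real_inner_self_nonneg (by norm_num))
    have h3 : ⟪π j, ν⟫_ℝ ≤ ⟪π j, -tstar • lam⟫_ℝ := by
      rw [hkey]
      rcases lt_or_eq_of_le (hAnn j) with hpos | hzero
      · have hjS : j ∈ S := by simp [hSdef, hpos]
        have : tstar ≤ B j / A j := Finset.inf'_le _ hjS
        calc tstar * A j ≤ (B j / A j) * A j :=
              mul_le_mul_of_nonneg_right this hpos.le
          _ = B j := by field_simp
      · rw [← hzero, mul_zero]; exact hBnn j
    linarith
end

section
/- Let μ ∈ E be strictly antidominant (equivalently (μ, α) < 0 for every α ∈ Δ⁺), let w ∈ W, and let Δ̃⁺ ⊆ Δ⁺ be a subset such that wμ = −Σ_{α∈Δ̃⁺} c_α·α with all c_α ≥ 0. Suppose α₀ ∈ Δ̃⁺ satisfies (α₀, γ) ≥ 0 for every γ ∈ Δ̃⁺ (for instance, α₀ is the highest root of a saturated root subsystem Δ̃ ⊆ Δ with Δ̃⁺ = Δ̃ ∩ Δ⁺). Then w⁻¹α₀ ∈ Δ⁺; that is, α₀ ∈ Δ̃⁺ ∩ wΔ⁺. (In the paper's formulation: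 μ = w₀χ for a strictly dominant weight χ and ww₀ ∈ W^{st}_χ.) -/
open InnerProductSpace

/-- Lemma 2.5 of the paper.  Let `μ` be strictly antidominant
(`(μ, α) < 0` for all `α ∈ Δ⁺`), `w ∈ W`, and `Δ̃⁺ ⊆ Δ⁺` a subset such that
`wμ = -Σ_{α ∈ Δ̃⁺} c_α·α` with `c_α ≥ 0`.  If `α₀ ∈ Δ̃⁺` satisfies `(α₀, γ) ≥ 0` for
every `γ ∈ Δ̃⁺` (e.g. `α₀` is the highest root of a saturated subsystem), then
`w⁻¹α₀ ∈ Δ⁺`, i.e. `α₀ ∈ Δ̃⁺ ∩ wΔ⁺`. -/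
theorem highest_root_stays_positive {E : Type*} [NormedAddCommGroup E]
    [InnerProductSpace ℝ E] [FiniteDimensional ℝ E]
    {ι : Type*} [Fintype ι]
    (Δ Δpos : Finset E) (b : Module.Basis ι ℝ E)
    -- `Δ` is a finite reduced crystallographic root system:
    (hΔ0 : (0 : E) ∉ Δ)
    (hneg : ∀ α ∈ Δ, -α ∈ Δ)
    (hrefl : ∀ α ∈ Δ, ∀ β ∈ Δ, β - (2 * ⟪β, α⟫_ℝ / ⟪α, α⟫_ℝ) • α ∈ Δ)
    (hcrys : ∀ α ∈ Δ, ∀ β ∈ Δ, ∃ n : ℤ, 2 * ⟪β, α⟫_ℝ / ⟪α, α⟫_ℝ = (n : ℝ))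
    (hred : ∀ α ∈ Δ, ∀ t : ℝ, t • α ∈ Δ → t = 1 ∨ t = -1)
    -- `Δpos` is a system of positive roots with simple roots the basis `b`:
    (hposΔ : Δpos ⊆ Δ)
    (hdecomp : ∀ α ∈ Δ, (α ∈ Δpos ∧ -α ∉ Δpos) ∨ (-α ∈ Δpos ∧ α ∉ Δpos))
    (hsimple : ∀ i, b i ∈ Δpos)
    (hposrep : ∀ α ∈ Δpos, ∀ i, 0 ≤ b.repr α i)
    -- a strictly antidominant weight and a Weyl group element:
    (μ : E) (hμ : ∀ α ∈ Δpos, ⟪μ, α⟫_ℝ < 0)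
    (w : E ≃ₗᵢ[ℝ] E) (hw : w ∈ weylGroup Δ)
    -- the subset `Δ̃⁺ ⊆ Δ⁺` and the expression of `wμ`:
    (Dtil : Finset E) (hDtil : Dtil ⊆ Δpos)
    (c : E → ℝ) (hcnn : ∀ α, 0 ≤ c α)
    (hwμ : w μ = -∑ α ∈ Dtil, c α • α)
    (α₀ : E) (hα₀ : α₀ ∈ Dtil) (hhigh : ∀ γ ∈ Dtil, 0 ≤ ⟪α₀, γ⟫_ℝ) :
    w.symm α₀ ∈ Δpos := by
  classical
  -- Every element of the Weyl group preserves Δ.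
  have hpres : ∀ u ∈ weylGroup Δ, ∀ β ∈ Δ, u β ∈ Δ := by
    intro u hu
    refine Subgroup.closure_induction (p := fun u _ => ∀ β ∈ Δ, u β ∈ Δ) ?_ ?_ ?_ ?_ hu
    · rintro x ⟨α, hα, hx⟩ β hβ
      rw [hx β]; exact hrefl α hα β hβ
    · intro β hβ; simpa using hβ
    · intro x y _ _ hx hy β hβ
      have : (x * y) β = x (y β) := rfl
      rw [this]; exact hx _ (hy β hβ)
    · intro x _ hx β hβ
      have himg : Finset.image (x : E → E) Δ = Δ := by
        apply Finset.eq_of_subset_of_card_le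
        · intro γ hγ
          obtain ⟨δ, hδ, rfl⟩ := Finset.mem_image.mp hγ
          exact hx δ hδ
        · rw [Finset.card_image_of_injective _ x.injective]
      rw [← himg] at hβ
      obtain ⟨δ, hδ, hδβ⟩ := Finset.mem_image.mp hβ
      have : (x⁻¹ : E ≃ₗᵢ[ℝ] E) β = δ := by
        have : (x⁻¹ : E ≃ₗᵢ[ℝ] E) (x δ) = δ := x.symm_apply_apply δ
        rwa [hδβ] at this
      rwa [this]
  have hα₀Δ : α₀ ∈ Δ := hposΔ (hDtil hα₀)
  have hsymmΔ : w.symm α₀ ∈ Δ := by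
    have := hpres w⁻¹ (inv_mem hw) α₀ hα₀Δ
    exact this
  -- ⟪μ, w.symm α₀⟫ = ⟪w μ, α₀⟫ ≤ 0
  have hkey : ⟪μ, w.symm α₀⟫_ℝ ≤ 0 := by
    have h1 : ⟪μ, w.symm α₀⟫_ℝ = ⟪w μ, α₀⟫_ℝ := by
      rw [← w.inner_map_map μ (w.symm α₀), w.apply_symm_apply]
    rw [h1, hwμ, inner_neg_left, neg_nonpos, sum_inner]
    apply Finset.sum_nonneg
    intro γ hγ
    rw [real_inner_smul_left]
    exact mul_nonneg (hcnn γ) (by rw [real_inner_comm]; exact hhigh γ hγ)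
  by_contra hneg'
  rcases hdecomp _ hsymmΔ with ⟨h1, _⟩ | ⟨h1, _⟩
  · exact hneg' h1
  · have := hμ _ h1
    rw [inner_neg_right] at this
    linarith
end

section
/- Let μ ∈ E be strictly antidominant and w ∈ W. Then the following are equivalent: (i) 0 ∈ wμ + Σ_{α∈Δ⁺} ℚ₊·α, i.e. −wμ is a nonnegative rational combination of positive roots; (ii) 0 ∈ wμ + Σ_{α∈Δ⁺∩wΔ⁺} ℚ₊·α, i.e. −wμ is a nonnegative rational combination of the roots α ∈ Δ⁺ with w⁻¹α ∈ Δ⁺. (In the paper's formulation, with μ = w₀χ for a strictly dominant weight χ: 0 ∈ ww₀χ + Σ_{α∈Δ⁺} ℚ₊α if and only if 0 ∈ ww₀χ + Σ_{α∈Δ⁺∩wΔ⁺} ℚ₊α.) -/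
open InnerProductSpace

/-- positivity of the inner product of a nonzero vector with itself -/
lemma inner_self_pos' {E : Type*} [NormedAddCommGroup E] [InnerProductSpace ℝ E]
    {x : E} (hx : x ≠ 0) : 0 < ⟪x, x⟫_ℝ :=
  lt_of_le_of_ne real_inner_self_nonneg (fun h => hx (inner_self_eq_zero.mp h.symm))

section Aux

variable {E : Type*} [NormedAddCommGroup E] [InnerProductSpace ℝ E] [DecidableEq E]

/-- A reflection is an involution. -/
lemma refl_invol {α : E} (hα : α ≠ 0) (u : E ≃ₗᵢ[ℝ] E)
    (hu : ∀ x : E, u x = x - (2 * ⟪x, α⟫_ℝ / ⟪α, α⟫_ℝ) • α) (x : E) : u (u x) = x := by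
  have hαα : ⟪α, α⟫_ℝ ≠ 0 := (inner_self_pos' hα).ne'
  rw [hu, hu]
  have h1 : ⟪x - (2 * ⟪x, α⟫_ℝ / ⟪α, α⟫_ℝ) • α, α⟫_ℝ = -⟪x, α⟫_ℝ := by
    rw [inner_sub_left, real_inner_smul_left]
    field_simp
    ring
  rw [h1]
  have h2 : 2 * -⟪x, α⟫_ℝ / ⟪α, α⟫_ℝ = -(2 * ⟪x, α⟫_ℝ / ⟪α, α⟫_ℝ) := by ring
  rw [h2, neg_smul, sub_neg_eq_add, sub_add_cancel]

/-- Elements of the Weyl group map roots to roots (in both directions). -/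
lemma weyl_stable (Δ : Finset E) (hΔ0 : (0 : E) ∉ Δ)
    (hrefl : ∀ α ∈ Δ, ∀ β ∈ Δ, β - (2 * ⟪β, α⟫_ℝ / ⟪α, α⟫_ℝ) • α ∈ Δ)
    {w : E ≃ₗᵢ[ℝ] E} (hw : w ∈ weylGroup Δ) :
    ∀ β ∈ Δ, w β ∈ Δ ∧ w.symm β ∈ Δ := by
  induction hw using Subgroup.closure_induction with
  | mem u hu =>
    obtain ⟨α, hα, hu⟩ := hu
    have hα0 : α ≠ 0 := fun h => hΔ0 (h ▸ hα)
    have hinv := refl_invol hα0 u hu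
    have hsymm : ∀ x, u.symm x = u x := by
      intro x
      conv_lhs => rw [← hinv x]
      exact u.symm_apply_apply (u x)
    intro β hβ
    refine ⟨?_, ?_⟩
    · rw [hu]; exact hrefl α hα β hβ
    · rw [hsymm, hu]; exact hrefl α hα β hβ
  | one =>
    intro β hβ
    exact ⟨by simpa using hβ, by exact hβ⟩
  | mul u v hu hv ihu ihv =>
    intro β hβ
    have h1 : (u * v) β = u (v β) := rfl
    have h2 : (u * v).symm β = v.symm (u.symm β) := rfl
    exact ⟨h1 ▸ (ihu _ ((ihv β hβ).1)).1, h2 ▸ (ihv _ ((ihu β hβ).2)).2⟩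
  | inv u hu ihu =>
    intro β hβ
    have h1 : (u⁻¹ : E ≃ₗᵢ[ℝ] E) β = u.symm β := rfl
    have h2 : (u⁻¹ : E ≃ₗᵢ[ℝ] E).symm β = u β := rfl
    exact ⟨h1 ▸ (ihu β hβ).2, h2 ▸ (ihu β hβ).1⟩

/-- A sum over a multiset all of whose elements pair nonnegatively with `δ` pairs
nonnegatively with `δ`. -/
lemma multiset_inner_nonneg (δ : E) :
    ∀ s : Multiset E, (∀ x ∈ s, 0 ≤ ⟪x, δ⟫_ℝ) → 0 ≤ ⟪s.sum, δ⟫_ℝ := by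
  intro s
  induction s using Multiset.induction_on with
  | empty => intro _; simp
  | cons a s ih =>
    intro h
    rw [Multiset.sum_cons, inner_add_left]
    exact add_nonneg (h a (Multiset.mem_cons_self a s))
      (ih fun x hx => h x (Multiset.mem_cons_of_mem hx))

/-- The descent lemma: if `v` pairs strictly negatively with each element of `B`, then any
multiset representation of `v` by elements of `Δpos` can be transformed into one avoiding
`B`, merging two summands at a time. -/
lemma descent (Δpos B : Finset E) (hB : B ⊆ Δpos) (h0 : (0 : E) ∉ Δpos)
    (hadd : ∀ α ∈ Δpos, ∀ δ ∈ Δpos, ⟪α, δ⟫_ℝ < 0 → α + δ ∈ Δpos)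
    (v : E) (hsign : ∀ δ ∈ B, ⟪v, δ⟫_ℝ < 0) :
    ∀ (n : ℕ) (m : Multiset E), Multiset.card m ≤ n → (∀ x ∈ m, x ∈ Δpos) → m.sum = v →
    ∃ m' : Multiset E, (∀ x ∈ m', x ∈ Δpos) ∧ (∀ δ ∈ B, δ ∉ m') ∧ m'.sum = v := by
  intro n
  induction n with
  | zero =>
    intro m hcard hmem hsum
    refine ⟨m, hmem, ?_, hsum⟩
    intro δ _ hδm
    rw [Nat.le_zero, Multiset.card_eq_zero] at hcard
    simp [hcard] at hδm
  | succ n ih =>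
    intro m hcard hmem hsumv
    by_cases hgood : ∀ δ ∈ B, δ ∉ m
    · exact ⟨m, hmem, hgood, hsumv⟩
    push_neg at hgood
    obtain ⟨δ, hδB, hδm⟩ := hgood
    have hδpos : δ ∈ Δpos := hB hδB
    have hδ0 : δ ≠ 0 := fun h => h0 (h ▸ hδpos)
    -- find a summand pairing negatively with δ
    have hex : ∃ α ∈ m.erase δ, ⟪α, δ⟫_ℝ < 0 := by
      by_contra hno
      push_neg at hno
      have hrest : 0 ≤ ⟪(m.erase δ).sum, δ⟫_ℝ := multiset_inner_nonneg δ _ hno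
      have hm : m.sum = δ + (m.erase δ).sum := by
        conv_lhs => rw [← Multiset.cons_erase hδm]
        rw [Multiset.sum_cons]
      have hpos : 0 < ⟪v, δ⟫_ℝ := by
        rw [← hsumv, hm, inner_add_left]
        exact add_pos_of_pos_of_nonneg (inner_self_pos' hδ0) hrest
      exact absurd hpos (not_lt.mpr (hsign δ hδB).le)
    obtain ⟨α, hαm, hαδ⟩ := hex
    have hαpos : α ∈ Δpos := hmem α (Multiset.mem_of_mem_erase hαm)
    have hγ : α + δ ∈ Δpos := hadd α hαpos δ hδpos hαδ
    set m₁ : Multiset E := (α + δ) ::ₘ ((m.erase δ).erase α) with hm₁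
    have hcd : Multiset.card (m.erase δ) = Multiset.card m - 1 :=
      Multiset.card_erase_of_mem hδm
    have hca : Multiset.card ((m.erase δ).erase α) = Multiset.card (m.erase δ) - 1 :=
      Multiset.card_erase_of_mem hαm
    have hc1 : 1 ≤ Multiset.card (m.erase δ) :=
      Multiset.card_pos_iff_exists_mem.mpr ⟨α, hαm⟩
    have hc2 : 1 ≤ Multiset.card m :=
      Multiset.card_pos_iff_exists_mem.mpr ⟨δ, hδm⟩
    have hc : Multiset.card m₁ ≤ n := by
      rw [hm₁, Multiset.card_cons, hca, hcd]
      omega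
    have hmem₁ : ∀ x ∈ m₁, x ∈ Δpos := by
      intro x hx
      rcases Multiset.mem_cons.mp hx with h | h
      · exact h ▸ hγ
      · exact hmem x (Multiset.mem_of_mem_erase (Multiset.mem_of_mem_erase h))
    have hsum₁ : m₁.sum = v := by
      have e1 : m.sum = δ + (m.erase δ).sum := by
        conv_lhs => rw [← Multiset.cons_erase hδm]
        rw [Multiset.sum_cons]
      have e2 : (m.erase δ).sum = α + ((m.erase δ).erase α).sum := by
        conv_lhs => rw [← Multiset.cons_erase hαm]
        rw [Multiset.sum_cons]
      rw [hm₁, Multiset.sum_cons, ← hsumv, e1, e2]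
      abel
    exact ih m₁ hc hmem₁ hsum₁

end Aux

section Aux2

variable {E : Type*} [NormedAddCommGroup E] [InnerProductSpace ℝ E]
  {ι : Type*} [Fintype ι]

/-- A root with nonnegative coordinates is positive. -/
lemma mem_pos_of_nonneg_coords (Δ Δpos : Finset E) (b : Module.Basis ι ℝ E)
    (hΔ0 : (0 : E) ∉ Δ)
    (hdecomp : ∀ α ∈ Δ, (α ∈ Δpos ∧ -α ∉ Δpos) ∨ (-α ∈ Δpos ∧ α ∉ Δpos))
    (hposrep : ∀ α ∈ Δpos, ∀ i, 0 ≤ b.repr α i)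
    {β : E} (hβ : β ∈ Δ) (hco : ∀ i, 0 ≤ b.repr β i) : β ∈ Δpos := by
  rcases hdecomp β hβ with ⟨h, _⟩ | ⟨h, _⟩
  · exact h
  · exfalso
    have hzero : ∀ i, b.repr β i = 0 := by
      intro i
      have h1 := hposrep _ h i
      rw [map_neg] at h1
      have h2 : -(b.repr β) i ≥ 0 := h1
      have := hco i
      linarith
    have : b.repr β = 0 := by ext i; exact hzero i
    have hβ0 : β = 0 := by
      have := congrArg b.repr.symm this
      simpa using this
    exact hΔ0 (hβ0 ▸ hβ)

/-- A strictly antidominant weight pairs strictly negatively with each positive root. -/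
lemma inner_mu_neg (Δ Δpos : Finset E) (b : Module.Basis ι ℝ E)
    (hΔ0 : (0 : E) ∉ Δ) (hposΔ : Δpos ⊆ Δ)
    (hposrep : ∀ α ∈ Δpos, ∀ i, 0 ≤ b.repr α i)
    (μ : E) (hμ : ∀ i, ⟪μ, b i⟫_ℝ < 0) :
    ∀ γ ∈ Δpos, ⟪μ, γ⟫_ℝ < 0 := by
  intro γ hγ
  have hγ0 : γ ≠ 0 := fun h => hΔ0 (h ▸ hposΔ hγ)
  have hrep := b.sum_repr γ
  have hex : ∃ i, b.repr γ i ≠ 0 := by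
    by_contra h
    push_neg at h
    apply hγ0
    have : b.repr γ = 0 := by ext i; exact h i
    have := congrArg b.repr.symm this
    simpa using this
  obtain ⟨i₀, hi₀⟩ := hex
  have hi₀pos : 0 < b.repr γ i₀ := lt_of_le_of_ne (hposrep γ hγ i₀) (Ne.symm hi₀)
  calc ⟪μ, γ⟫_ℝ = ∑ i, b.repr γ i * ⟪μ, b i⟫_ℝ := by
        conv_lhs => rw [← hrep]
        rw [inner_sum]
        exact Finset.sum_congr rfl fun i _ => real_inner_smul_right μ _ _
    _ < ∑ _i : ι, (0 : ℝ) := by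
        refine Finset.sum_lt_sum (fun i _ => ?_) ⟨i₀, Finset.mem_univ _, ?_⟩
        · exact mul_nonpos_iff.mpr (Or.inl ⟨hposrep γ hγ i, (hμ i).le⟩)
        · exact mul_neg_of_pos_of_neg hi₀pos (hμ i₀)
    _ = 0 := by simp

/-- Two positive roots with negative inner product sum to a positive root. -/
lemma pos_add (Δ Δpos : Finset E) (b : Module.Basis ι ℝ E)
    (hΔ0 : (0 : E) ∉ Δ)
    (hrefl : ∀ α ∈ Δ, ∀ β ∈ Δ, β - (2 * ⟪β, α⟫_ℝ / ⟪α, α⟫_ℝ) • α ∈ Δ)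
    (hcrys : ∀ α ∈ Δ, ∀ β ∈ Δ, ∃ n : ℤ, 2 * ⟪β, α⟫_ℝ / ⟪α, α⟫_ℝ = (n : ℝ))
    (hred : ∀ α ∈ Δ, ∀ t : ℝ, t • α ∈ Δ → t = 1 ∨ t = -1)
    (hposΔ : Δpos ⊆ Δ)
    (hdecomp : ∀ α ∈ Δ, (α ∈ Δpos ∧ -α ∉ Δpos) ∨ (-α ∈ Δpos ∧ α ∉ Δpos))
    (hposrep : ∀ α ∈ Δpos, ∀ i, 0 ≤ b.repr α i) :
    ∀ α ∈ Δpos, ∀ δ ∈ Δpos, ⟪α, δ⟫_ℝ < 0 → α + δ ∈ Δpos := by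
  intro α hα δ hδ hinner
  have hαΔ : α ∈ Δ := hposΔ hα
  have hδΔ : δ ∈ Δ := hposΔ hδ
  have hα0 : α ≠ 0 := fun h => hΔ0 (h ▸ hαΔ)
  have hδ0 : δ ≠ 0 := fun h => hΔ0 (h ▸ hδΔ)
  have hαα : (0:ℝ) < ⟪α, α⟫_ℝ := inner_self_pos' hα0
  have hδδ : (0:ℝ) < ⟪δ, δ⟫_ℝ := inner_self_pos' hδ0
  have hsym : ⟪δ, α⟫_ℝ = ⟪α, δ⟫_ℝ := real_inner_comm α δ
  have key : α + δ ∈ Δ := by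
    obtain ⟨n₁, hn₁⟩ := hcrys δ hδΔ α hαΔ
    obtain ⟨n₂, hn₂⟩ := hcrys α hαΔ δ hδΔ
    have hn₁neg : n₁ ≤ -1 := by
      have h1 : (n₁ : ℝ) < 0 := by
        rw [← hn₁]
        exact div_neg_of_neg_of_pos (by linarith) hδδ
      have : n₁ < 0 := by exact_mod_cast h1
      omega
    have hn₂neg : n₂ ≤ -1 := by
      have h1 : (n₂ : ℝ) < 0 := by
        rw [← hn₂, hsym]
        exact div_neg_of_neg_of_pos (by linarith) hαα
      have : n₂ < 0 := by exact_mod_cast h1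
      omega
    have hCS : ⟪α, δ⟫_ℝ * ⟪α, δ⟫_ℝ < ⟪α, α⟫_ℝ * ⟪δ, δ⟫_ℝ := by
      rcases lt_or_ge (⟪α, δ⟫_ℝ * ⟪α, δ⟫_ℝ) (⟪α, α⟫_ℝ * ⟪δ, δ⟫_ℝ) with h | h
      · exact h
      exfalso
      have heq : ⟪α, δ⟫_ℝ * ⟪α, δ⟫_ℝ = ⟪α, α⟫_ℝ * ⟪δ, δ⟫_ℝ :=
        le_antisymm (real_inner_mul_inner_self_le α δ) h
      set t : ℝ := ⟪α, δ⟫_ℝ / ⟪δ, δ⟫_ℝ with ht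
      have hx : α - t • δ = 0 := by
        have hz : ⟪α - t • δ, α - t • δ⟫_ℝ = 0 := by
          rw [inner_sub_left, inner_sub_right, inner_sub_right, real_inner_smul_left,
            real_inner_smul_left, real_inner_smul_right, real_inner_smul_right, hsym, ht]
          field_simp
          ring_nf
          nlinarith [heq]
        exact inner_self_eq_zero.mp hz
      have hαt : t • δ = α := by
        have := sub_eq_zero.mp hx
        exact this.symm
      have htval := hred δ hδΔ t (by rw [hαt]; exact hαΔ)
      have htneg : t < 0 := div_neg_of_neg_of_pos hinner hδδ
      rcases htval with h1 | h1
      · rw [h1] at htneg; norm_num at htneg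
      · rw [h1] at hαt
        have hαneg : α = -δ := by
          rw [← hαt]; simp
        rcases hdecomp δ hδΔ with ⟨_, h2⟩ | ⟨_, h2⟩
        · exact h2 (hαneg ▸ hα)
        · exact h2 hδ
    have hprod : (n₁ : ℝ) * (n₂ : ℝ) < 4 := by
      rw [← hn₁, ← hn₂, hsym]
      have hle : (2 * ⟪α, δ⟫_ℝ / ⟪δ, δ⟫_ℝ) * (2 * ⟪α, δ⟫_ℝ / ⟪α, α⟫_ℝ)
          = 4 * (⟪α, δ⟫_ℝ * ⟪α, δ⟫_ℝ) / (⟪δ, δ⟫_ℝ * ⟪α, α⟫_ℝ) := by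
        field_simp
        ring
      rw [hle, div_lt_iff₀ (by positivity)]
      nlinarith [hCS]
    have hone : n₁ = -1 ∨ n₂ = -1 := by
      by_contra hcon
      push_neg at hcon
      have h1 : n₁ ≤ -2 := by omega
      have h2 : n₂ ≤ -2 := by omega
      have h4 : (4 : ℤ) ≤ n₁ * n₂ := by nlinarith
      have h4' : (4 : ℝ) ≤ (n₁ : ℝ) * (n₂ : ℝ) := by exact_mod_cast h4
      linarith
    rcases hone with h1 | h1
    · have := hrefl δ hδΔ α hαΔ
      rw [hn₁, h1] at this
      simpa [sub_neg_eq_add] using this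
    · have := hrefl α hαΔ δ hδΔ
      rw [hn₂, h1] at this
      have h2 : δ - (-1 : ℝ) • α = α + δ := by
        rw [neg_smul, sub_neg_eq_add, one_smul]
        abel
      rwa [Int.cast_neg, Int.cast_one, h2] at this
  refine mem_pos_of_nonneg_coords Δ Δpos b hΔ0 hdecomp hposrep key fun i => ?_
  rw [map_add]
  have := hposrep α hα i
  have := hposrep δ hδ i
  simp only [Finsupp.coe_add, Pi.add_apply]
  linarith

end Aux2

/-- Corollary 2.6 of the paper.  Let `μ` be strictly antidominant
and `w ∈ W`.  Then `0 ∈ wμ + Σ_{α ∈ Δ⁺} ℚ₊·α` iff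
`0 ∈ wμ + Σ_{α ∈ Δ⁺ ∩ wΔ⁺} ℚ₊·α`; that is, `-wμ` is a nonnegative rational
combination of positive roots iff it is a nonnegative rational combination of the
positive roots `α` with `w⁻¹α ∈ Δ⁺`. -/
theorem zero_in_cone_iff_cone_of_w_positive_roots {E : Type*} [NormedAddCommGroup E]
    [InnerProductSpace ℝ E] [FiniteDimensional ℝ E]
    {ι : Type*} [Fintype ι]
    (Δ Δpos : Finset E) (b : Module.Basis ι ℝ E)
    -- `Δ` is a finite reduced crystallographic root system:
    (hΔ0 : (0 : E) ∉ Δ)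
    (hneg : ∀ α ∈ Δ, -α ∈ Δ)
    (hrefl : ∀ α ∈ Δ, ∀ β ∈ Δ, β - (2 * ⟪β, α⟫_ℝ / ⟪α, α⟫_ℝ) • α ∈ Δ)
    (hcrys : ∀ α ∈ Δ, ∀ β ∈ Δ, ∃ n : ℤ, 2 * ⟪β, α⟫_ℝ / ⟪α, α⟫_ℝ = (n : ℝ))
    (hred : ∀ α ∈ Δ, ∀ t : ℝ, t • α ∈ Δ → t = 1 ∨ t = -1)
    -- `Δpos` is a system of positive roots with simple roots the basis `b`:
    (hposΔ : Δpos ⊆ Δ)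
    (hdecomp : ∀ α ∈ Δ, (α ∈ Δpos ∧ -α ∉ Δpos) ∨ (-α ∈ Δpos ∧ α ∉ Δpos))
    (hsimple : ∀ i, b i ∈ Δpos)
    (hposrep : ∀ α ∈ Δpos, ∀ i, 0 ≤ b.repr α i)
    -- a strictly antidominant weight and a Weyl group element:
    (μ : E) (hμ : ∀ i, ⟪μ, b i⟫_ℝ < 0)
    (w : E ≃ₗᵢ[ℝ] E) (hw : w ∈ weylGroup Δ) :
    (∃ c : E → ℚ, (∀ α, 0 ≤ c α) ∧ w μ = -∑ α ∈ Δpos, (c α : ℝ) • α) ↔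
      (∃ c : E → ℚ, (∀ α, 0 ≤ c α) ∧ (∀ α ∈ Δpos, w.symm α ∉ Δpos → c α = 0) ∧
        w μ = -∑ α ∈ Δpos, (c α : ℝ) • α) := by
  classical
  constructor
  · rintro ⟨c, hc, hv⟩
    set v : E := ∑ α ∈ Δpos, (c α : ℝ) • α with hvdef
    have h0pos : (0 : E) ∉ Δpos := fun h => hΔ0 (hposΔ h)
    -- the bad roots
    set B : Finset E := Δpos.filter (fun δ => w.symm δ ∉ Δpos) with hBdef
    have hBsub : B ⊆ Δpos := Finset.filter_subset _ _
    -- the sign condition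
    have hμneg := inner_mu_neg Δ Δpos b hΔ0 hposΔ hposrep μ hμ
    have hsign : ∀ δ ∈ B, ⟪v, δ⟫_ℝ < 0 := by
      intro δ hδ
      rw [hBdef, Finset.mem_filter] at hδ
      obtain ⟨hδpos, hδbad⟩ := hδ
      have hδΔ : δ ∈ Δ := hposΔ hδpos
      have hwsymmΔ : w.symm δ ∈ Δ := (weyl_stable Δ hΔ0 hrefl hw δ hδΔ).2
      have hneg' : -(w.symm δ) ∈ Δpos := by
        rcases hdecomp _ hwsymmΔ with ⟨h, _⟩ | ⟨h, _⟩
        · exact absurd h hδbad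
        · exact h
      have hlt : ⟪μ, -(w.symm δ)⟫_ℝ < 0 := hμneg _ hneg'
      rw [inner_neg_right] at hlt
      have hgt : 0 < ⟪μ, w.symm δ⟫_ℝ := by linarith
      have hvw : ⟪v, δ⟫_ℝ = -⟪μ, w.symm δ⟫_ℝ := by
        have h1 : v = -(w μ) := by rw [hv]; simp
        rw [h1, inner_neg_left]
        congr 1
        calc ⟪w μ, δ⟫_ℝ = ⟪w μ, w (w.symm δ)⟫_ℝ := by rw [w.apply_symm_apply]
          _ = ⟪μ, w.symm δ⟫_ℝ := w.inner_map_map μ (w.symm δ)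
      rw [hvw]
      linarith
    -- clear denominators
    set N : ℕ := ∏ α ∈ Δpos, (c α).den with hNdef
    have hN : 0 < N := Finset.prod_pos fun α _ => (c α).pos
    set natc : E → ℕ := fun α => ((c α) * N).num.toNat with hnatc
    have hkey : ∀ α ∈ Δpos, ((natc α : ℚ)) = c α * N := by
      intro α hα
      obtain ⟨t, ht⟩ := Finset.dvd_prod_of_mem (fun α => (c α).den) hα
      have hden : ((c α).den : ℚ) ≠ 0 := by
        exact_mod_cast (c α).den_nz
      have hcd : (c α) * ((c α).den : ℚ) = ((c α).num : ℚ) := by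
        have h := Rat.num_div_den (c α)
        exact ((div_eq_iff hden).mp h).symm
      have hval : c α * (N : ℚ) = (((c α).num * t : ℤ) : ℚ) := by
        have hNt : (N : ℚ) = ((c α).den : ℚ) * (t : ℚ) := by
          rw [hNdef]; exact_mod_cast congrArg (Nat.cast (R := ℚ)) ht
        rw [hNt, ← mul_assoc, hcd]
        push_cast
        ring
      have h3 : (0 : ℤ) ≤ (c α).num * t := by
        have h4 : (0:ℤ) ≤ (c α).num := Rat.num_nonneg.mpr (hc α)
        positivity
      calc ((natc α : ℚ)) = (((c α).num * t).toNat : ℚ) := by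
            rw [hnatc]
            simp only
            rw [hval, Rat.num_intCast]
          _ = (((c α).num * t : ℤ) : ℚ) := by exact_mod_cast congrArg (fun z : ℤ => (z : ℚ)) (Int.toNat_of_nonneg h3)
          _ = c α * N := hval.symm
    -- build the multiset
    set m : Multiset E := Δpos.val.bind (fun α => Multiset.replicate (natc α) α) with hm
    have hmmem : ∀ x ∈ m, x ∈ Δpos := by
      intro x hx
      rw [hm, Multiset.mem_bind] at hx
      obtain ⟨α, hα, hx⟩ := hx
      rw [Multiset.eq_of_mem_replicate hx]
      exact hα
    have hmsum : m.sum = (N : ℝ) • v := by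
      have h1 : m.sum = ∑ α ∈ Δpos, natc α • α := by
        rw [hm, Multiset.sum_bind]
        simp only [Multiset.sum_replicate]
        rfl
      rw [h1, hvdef, Finset.smul_sum]
      refine Finset.sum_congr rfl fun α hα => ?_
      rw [← Nat.cast_smul_eq_nsmul ℝ, smul_smul]
      congr 1
      have := hkey α hα
      have hcast : ((natc α : ℝ)) = ((c α : ℝ)) * (N : ℝ) := by
        exact_mod_cast congrArg (Rat.cast (K := ℝ)) this
      rw [hcast]; ring
    -- apply descent
    have hadd := pos_add Δ Δpos b hΔ0 hrefl hcrys hred hposΔ hdecomp hposrep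
    have hsign' : ∀ δ ∈ B, ⟪(N : ℝ) • v, δ⟫_ℝ < 0 := by
      intro δ hδ
      rw [real_inner_smul_left]
      exact mul_neg_of_pos_of_neg (by exact_mod_cast hN) (hsign δ hδ)
    obtain ⟨m', hm'mem, hm'B, hm'sum⟩ :=
      descent Δpos B hBsub h0pos hadd ((N : ℝ) • v) hsign' (Multiset.card m) m le_rfl hmmem hmsum
    -- read off coefficients
    refine ⟨fun x => (m'.count x : ℚ) / N, fun α => by positivity, ?_, ?_⟩
    · intro α hα hbad
      have hαB : α ∈ B := by
        rw [hBdef, Finset.mem_filter]; exact ⟨hα, hbad⟩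
      have hnm : α ∉ m' := hm'B α hαB
      simp [Multiset.count_eq_zero_of_notMem hnm]
    · have hsub : m'.toFinset ⊆ Δpos := by
        intro x hx
        exact hm'mem x (Multiset.mem_toFinset.mp hx)
      have h1 : m'.sum = ∑ α ∈ m'.toFinset, m'.count α • α := by
        conv_lhs => rw [← Multiset.map_id' m']
        rw [Finset.sum_multiset_map_count]
      have h2 : ∑ α ∈ Δpos, m'.count α • α = m'.sum := by
        rw [h1]
        refine (Finset.sum_subset hsub ?_).symm
        intro x _ hx
        rw [Multiset.count_eq_zero_of_notMem (fun h => hx (Multiset.mem_toFinset.mpr h))]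
        simp
      have h3 : ∑ α ∈ Δpos, ((m'.count α : ℝ)) • α = (N : ℝ) • v := by
        rw [← hm'sum, ← h2]
        refine Finset.sum_congr rfl fun α _ => ?_
        rw [Nat.cast_smul_eq_nsmul]
      have h4 : ∑ α ∈ Δpos, (((m'.count α : ℚ) / N : ℚ) : ℝ) • α = v := by
        have hN' : ((N : ℝ)) ≠ 0 := by
          exact_mod_cast hN.ne'
        calc ∑ α ∈ Δpos, (((m'.count α : ℚ) / N : ℚ) : ℝ) • α
            = ∑ α ∈ Δpos, ((N : ℝ)⁻¹ * (m'.count α : ℝ)) • α := by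
              refine Finset.sum_congr rfl fun α _ => ?_
              congr 1
              push_cast
              field_simp
          _ = (N : ℝ)⁻¹ • ∑ α ∈ Δpos, ((m'.count α : ℝ)) • α := by
              rw [Finset.smul_sum]
              refine Finset.sum_congr rfl fun α _ => ?_
              rw [smul_smul]
          _ = (N : ℝ)⁻¹ • ((N : ℝ) • v) := by rw [h3]
          _ = v := by rw [smul_smul, inv_mul_cancel₀ hN', one_smul]
      rw [h4]
      exact hv
  · rintro ⟨c, h1, _, h3⟩
    exact ⟨c, h1, h3⟩
end

section
/- (Path construction.) Let μ ∈ E be strictly antidominant, let w ∈ W, and suppose 0 ∈ wμ + Σ_{α∈Δ⁺} ℚ₊·α. Then there exist finitely many roots β₁, …, β_m, each belonging to Δ⁺ ∩ wΔ⁺ (i.e. β_i ∈ Δ⁺ with w⁻¹β_i ∈ Δ⁺), and nonnegative rationals k₁, …, k_m, such that wμ = −(k₁β₁ + … + k_mβ_m) and (β_i, β_j) ≥ 0 for all 1 ≤ i, j ≤ m. (These roots arise as highest roots of a nested chain of saturated root subsystems; the existence of such a decomposition with pairwise non-obtuse roots is the combinatorial core of the proof of Theorem 2.1.) -/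
open InnerProductSpace

section PCAux

variable {E : Type*} [NormedAddCommGroup E] [InnerProductSpace ℝ E]

-- inner of a multiset sum
lemma pc_multiset_inner_nonneg (y : E) (s : Multiset E) (h : ∀ x ∈ s, 0 ≤ ⟪x, y⟫_ℝ) :
    0 ≤ ⟪s.sum, y⟫_ℝ := by
  induction s using Multiset.induction_on with
  | empty => simp
  | cons a t ih =>
    simp only [Multiset.sum_cons, inner_add_left]
    have h1 := h a (Multiset.mem_cons_self a t)
    have h2 := ih (fun x hx => h x (Multiset.mem_cons_of_mem hx))
    linarith

-- core combinatorial lemma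
lemma pc_core (Δpos : Finset E)
    (hsum : ∀ α ∈ Δpos, ∀ β ∈ Δpos, ⟪α, β⟫_ℝ < 0 → α + β ∈ Δpos) :
    ∀ (n : ℕ) (l : Multiset E), Multiset.card l ≤ n → (∀ α ∈ l, α ∈ Δpos) →
    ∃ l' : Multiset E, (∀ α ∈ l', α ∈ Δpos) ∧ l'.sum = l.sum ∧
      ∀ α ∈ l', ∀ β ∈ l', 0 ≤ ⟪α, β⟫_ℝ := by
  classical
  intro n
  induction n with
  | zero =>
    intro l hc _
    have hl : l = 0 := Multiset.card_eq_zero.mp (Nat.le_zero.mp hc)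
    exact ⟨0, by simp, by simp [hl], by simp⟩
  | succ n ih =>
    intro l hc hl
    by_cases hp : ∀ α ∈ l, ∀ β ∈ l, 0 ≤ ⟪α, β⟫_ℝ
    · exact ⟨l, hl, rfl, hp⟩
    push_neg at hp
    obtain ⟨α, hα, β, hβ, hneg⟩ := hp
    have hαβ : β ≠ α := by
      rintro rfl
      exact absurd real_inner_self_nonneg (not_le.mpr hneg)
    have hβ' : β ∈ l.erase α := (Multiset.mem_erase_of_ne hαβ).mpr hβ
    have hl1 : l = α ::ₘ β ::ₘ ((l.erase α).erase β) := by
      rw [Multiset.cons_erase hβ', Multiset.cons_erase hα]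
    set t := (l.erase α).erase β with ht
    have hcard : Multiset.card ((α + β) ::ₘ t) ≤ n := by
      have : Multiset.card l = Multiset.card t + 2 := by
        rw [hl1]; simp [ht]
      simp only [Multiset.card_cons]
      omega
    have hmem : ∀ x ∈ (α + β) ::ₘ t, x ∈ Δpos := by
      intro x hx
      rcases Multiset.mem_cons.mp hx with hx | hx
      · subst hx; exact hsum α (hl α hα) β (hl β hβ) hneg
      · rw [ht] at hx
        exact hl x (Multiset.mem_of_mem_erase (Multiset.mem_of_mem_erase hx))
    obtain ⟨l', h1, h2, h3⟩ := ih ((α + β) ::ₘ t) hcard hmem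
    refine ⟨l', h1, ?_, h3⟩
    rw [h2, hl1]
    simp only [Multiset.sum_cons]
    abel


lemma pc_inner_self_pos {x : E} (hx : x ≠ 0) : (0:ℝ) < ⟪x, x⟫_ℝ :=
  lt_of_le_of_ne real_inner_self_nonneg (Ne.symm (inner_self_ne_zero.mpr hx))

lemma pc_pos_of_repr {ι : Type*} [Fintype ι] (Δ Δpos : Finset E) (b : Module.Basis ι ℝ E)
    (hΔ0 : (0 : E) ∉ Δ)
    (hdecomp : ∀ α ∈ Δ, (α ∈ Δpos ∧ -α ∉ Δpos) ∨ (-α ∈ Δpos ∧ α ∉ Δpos))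
    (hposrep : ∀ α ∈ Δpos, ∀ i, 0 ≤ b.repr α i)
    (γ : E) (hγ : γ ∈ Δ) (hrep : ∀ i, 0 ≤ b.repr γ i) : γ ∈ Δpos := by
  rcases hdecomp γ hγ with h | h
  · exact h.1
  · exfalso
    have hzero : ∀ i, b.repr γ i = 0 := by
      intro i
      have h1 := hposrep _ h.1 i
      rw [map_neg] at h1
      simp only [Finsupp.coe_neg, Pi.neg_apply] at h1
      linarith [hrep i]
    have : γ = 0 := by
      have : b.repr γ = 0 := Finsupp.ext hzero
      simpa using congrArg b.repr.symm this
    exact hΔ0 (this ▸ hγ)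

lemma pc_root_add {ι : Type*} [Fintype ι] (Δ Δpos : Finset E) (b : Module.Basis ι ℝ E)
    (hΔ0 : (0 : E) ∉ Δ)
    (hrefl : ∀ α ∈ Δ, ∀ β ∈ Δ, β - (2 * ⟪β, α⟫_ℝ / ⟪α, α⟫_ℝ) • α ∈ Δ)
    (hcrys : ∀ α ∈ Δ, ∀ β ∈ Δ, ∃ n : ℤ, 2 * ⟪β, α⟫_ℝ / ⟪α, α⟫_ℝ = (n : ℝ))
    (hposΔ : Δpos ⊆ Δ)
    (hdecomp : ∀ α ∈ Δ, (α ∈ Δpos ∧ -α ∉ Δpos) ∨ (-α ∈ Δpos ∧ α ∉ Δpos))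
    (hposrep : ∀ α ∈ Δpos, ∀ i, 0 ≤ b.repr α i) :
    ∀ α ∈ Δpos, ∀ β ∈ Δpos, ⟪α, β⟫_ℝ < 0 → α + β ∈ Δpos := by
  intro α hα β hβ hneg
  have hαΔ := hposΔ hα
  have hβΔ := hposΔ hβ
  have hα0 : α ≠ 0 := fun h => hΔ0 (h ▸ hαΔ)
  have hβ0 : β ≠ 0 := fun h => hΔ0 (h ▸ hβΔ)
  have hipα : (0:ℝ) < ⟪α, α⟫_ℝ := pc_inner_self_pos hα0
  have hipβ : (0:ℝ) < ⟪β, β⟫_ℝ := pc_inner_self_pos hβ0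
  have hne : β ≠ -α := by
    rintro rfl
    rcases hdecomp α hαΔ with h | h
    · exact h.2 hβ
    · exact h.2 hα
  have hsymm : ⟪β, α⟫_ℝ = ⟪α, β⟫_ℝ := real_inner_comm α β
  obtain ⟨n1, hn1⟩ := hcrys α hαΔ β hβΔ
  obtain ⟨m1, hm1⟩ := hcrys β hβΔ α hαΔ
  have hn1neg : n1 < 0 := by
    have : (n1 : ℝ) < 0 := by
      rw [← hn1]
      apply div_neg_of_neg_of_pos _ hipα
      rw [hsymm]; linarith
    exact_mod_cast this
  have hm1neg : m1 < 0 := by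
    have : (m1 : ℝ) < 0 := by
      rw [← hm1]
      exact div_neg_of_neg_of_pos (by linarith) hipβ
    exact_mod_cast this
  suffices hΔmem : α + β ∈ Δ by
    apply pc_pos_of_repr Δ Δpos b hΔ0 hdecomp hposrep _ hΔmem
    intro i
    rw [map_add]
    have := hposrep α hα i
    have := hposrep β hβ i
    simp only [Finsupp.coe_add, Pi.add_apply]
    linarith
  by_cases hcase : n1 = -1
  · have := hrefl α hαΔ β hβΔ
    rw [hn1, hcase] at this
    simpa [sub_eq_add_neg, add_comm] using this
  by_cases hcase2 : m1 = -1
  · have := hrefl β hβΔ α hαΔ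
    rw [hm1, hcase2] at this
    simpa [sub_eq_add_neg] using this
  exfalso
  have hn2 : n1 ≤ -2 := by omega
  have hm2 : m1 ≤ -2 := by omega
  have e1 : ⟪α, β⟫_ℝ = (n1 : ℝ) * ⟪α, α⟫_ℝ / 2 := by
    rw [← hsymm]
    field_simp at hn1
    linarith [hn1]
  have e2 : ⟪α, β⟫_ℝ = (m1 : ℝ) * ⟪β, β⟫_ℝ / 2 := by
    field_simp at hm1
    linarith [hm1]
  have hcs := real_inner_mul_inner_self_le α β
  have hprodR : (n1 : ℝ) * (m1 : ℝ) ≤ 4 := by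
    have h4 : (n1:ℝ) * (m1:ℝ) * (⟪α, α⟫_ℝ * ⟪β, β⟫_ℝ) = 4 * (⟪α, β⟫_ℝ * ⟪α, β⟫_ℝ) := by
      nlinarith [e1, e2]
    nlinarith [mul_pos hipα hipβ, hcs]
  have hprod : n1 * m1 ≤ 4 := by exact_mod_cast hprodR
  have hn : n1 = -2 := by nlinarith
  have hm : m1 = -2 := by nlinarith
  rw [hn] at e1; rw [hm] at e2
  have hzero : ⟪α + β, α + β⟫_ℝ = 0 := by
    rw [inner_add_add_self, ← hsymm]
    push_cast at e1 e2
    linarith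
  exact hne (eq_neg_of_add_eq_zero_right (inner_self_eq_zero.mp hzero))

lemma pc_weyl_stab (Δ : Finset E)
    (hΔ0 : (0 : E) ∉ Δ)
    (hrefl : ∀ α ∈ Δ, ∀ β ∈ Δ, β - (2 * ⟪β, α⟫_ℝ / ⟪α, α⟫_ℝ) • α ∈ Δ)
    (u : E ≃ₗᵢ[ℝ] E) (hu : u ∈ weylGroup Δ) :
    (∀ α ∈ Δ, u α ∈ Δ) ∧ (∀ α ∈ Δ, u.symm α ∈ Δ) := by
  have main : ∀ v : E ≃ₗᵢ[ℝ] E, v ∈ weylGroup Δ →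
      (∀ α ∈ Δ, v α ∈ Δ) ∧ (∀ α ∈ Δ, v⁻¹ α ∈ Δ) := by
    intro v hv
    refine Subgroup.closure_induction ?_ ?_ ?_ ?_ hv
    · rintro x ⟨α, hαΔ, hx⟩
      have hα0 : α ≠ 0 := fun h => hΔ0 (h ▸ hαΔ)
      have hip : ⟪α, α⟫_ℝ ≠ 0 := ne_of_gt (pc_inner_self_pos hα0)
      have hinvol : ∀ y : E, x (x y) = y := by
        intro y
        rw [hx, hx]
        have hinner : ⟪y - (2 * ⟪y, α⟫_ℝ / ⟪α, α⟫_ℝ) • α, α⟫_ℝ = -⟪y, α⟫_ℝ := by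
          rw [inner_sub_left, real_inner_smul_left]
          field_simp
          ring
        rw [hinner]
        have : 2 * -⟪y, α⟫_ℝ / ⟪α, α⟫_ℝ = -(2 * ⟪y, α⟫_ℝ / ⟪α, α⟫_ℝ) := by ring
        rw [this, neg_smul, sub_neg_eq_add]
        abel
      have hsymm_eq : ∀ y : E, x⁻¹ y = x y := by
        intro y
        rw [LinearIsometryEquiv.inv_def]
        conv_lhs => rw [← hinvol y]
        rw [x.symm_apply_apply]
      constructor
      · intro β hβ
        rw [hx β]
        exact hrefl α hαΔ β hβ
      · intro β hβ
        rw [hsymm_eq β, hx β]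
        exact hrefl α hαΔ β hβ
    · constructor <;> intro β hβ <;> simpa using hβ
    · rintro x y _ _ ⟨hx1, hx2⟩ ⟨hy1, hy2⟩
      constructor
      · intro β hβ
        rw [LinearIsometryEquiv.coe_mul]
        exact hx1 _ (hy1 β hβ)
      · intro β hβ
        rw [mul_inv_rev, LinearIsometryEquiv.coe_mul]
        exact hy2 _ (hx2 β hβ)
    · rintro x _ ⟨hx1, hx2⟩
      exact ⟨hx2, by simpa using hx1⟩
  obtain ⟨h1, h2⟩ := main u hu
  exact ⟨h1, by simpa [LinearIsometryEquiv.inv_def] using h2⟩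

end PCAux

/-- Path construction, combinatorial core of Theorem 2.1.
Let `μ` be strictly antidominant, `w ∈ W`, and `0 ∈ wμ + Σ_{α ∈ Δ⁺} ℚ₊·α`.  Then
there are roots `β₁, …, β_m ∈ Δ⁺ ∩ wΔ⁺` (i.e. `βᵢ ∈ Δ⁺` with `w⁻¹βᵢ ∈ Δ⁺`) and
nonnegative rationals `k₁, …, k_m` with `wμ = -(k₁β₁ + … + k_mβ_m)` and
`(βᵢ, βⱼ) ≥ 0` for all `i, j`. -/
theorem path_construction {E : Type*} [NormedAddCommGroup E]
    [InnerProductSpace ℝ E] [FiniteDimensional ℝ E]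
    {ι : Type*} [Fintype ι]
    (Δ Δpos : Finset E) (b : Module.Basis ι ℝ E)
    -- `Δ` is a finite reduced crystallographic root system:
    (hΔ0 : (0 : E) ∉ Δ)
    (hneg : ∀ α ∈ Δ, -α ∈ Δ)
    (hrefl : ∀ α ∈ Δ, ∀ β ∈ Δ, β - (2 * ⟪β, α⟫_ℝ / ⟪α, α⟫_ℝ) • α ∈ Δ)
    (hcrys : ∀ α ∈ Δ, ∀ β ∈ Δ, ∃ n : ℤ, 2 * ⟪β, α⟫_ℝ / ⟪α, α⟫_ℝ = (n : ℝ))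
    (hred : ∀ α ∈ Δ, ∀ t : ℝ, t • α ∈ Δ → t = 1 ∨ t = -1)
    -- `Δpos` is a system of positive roots with simple roots the basis `b`:
    (hposΔ : Δpos ⊆ Δ)
    (hdecomp : ∀ α ∈ Δ, (α ∈ Δpos ∧ -α ∉ Δpos) ∨ (-α ∈ Δpos ∧ α ∉ Δpos))
    (hsimple : ∀ i, b i ∈ Δpos)
    (hposrep : ∀ α ∈ Δpos, ∀ i, 0 ≤ b.repr α i)
    -- a strictly antidominant weight and a Weyl group element:
    (μ : E) (hμ : ∀ i, ⟪μ, b i⟫_ℝ < 0)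
    (w : E ≃ₗᵢ[ℝ] E) (hw : w ∈ weylGroup Δ)
    -- `0 ∈ wμ + Σ_{α ∈ Δ⁺} ℚ₊·α`:
    (h0 : ∃ c : E → ℚ, (∀ α, 0 ≤ c α) ∧ w μ = -∑ α ∈ Δpos, (c α : ℝ) • α) :
    ∃ (m : ℕ) (β : Fin m → E) (k : Fin m → ℚ),
      (∀ i, β i ∈ Δpos ∧ w.symm (β i) ∈ Δpos) ∧
      (∀ i, 0 ≤ k i) ∧
      w μ = -∑ i, (k i : ℝ) • β i ∧
      (∀ i j, 0 ≤ ⟪β i, β j⟫_ℝ) := by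
  classical
  obtain ⟨c, hc, hwμ⟩ := h0
  -- μ has negative inner product with every positive root
  have hμneg : ∀ α ∈ Δpos, ⟪μ, α⟫_ℝ < 0 := by
    intro α hα
    have hα0 : α ≠ 0 := fun h => hΔ0 (h ▸ hposΔ hα)
    have hrepr : ∑ i, b.repr α i • b i = α := b.sum_repr α
    rw [← hrepr, inner_sum]
    simp_rw [real_inner_smul_right]
    have hne : ∃ i, b.repr α i ≠ 0 := by
      by_contra h
      push_neg at h
      apply hα0
      have hrz : b.repr α = 0 := by ext i; simpa using h i
      simpa using congrArg b.repr.symm hrz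
    obtain ⟨i0, hi0⟩ := hne
    have : ∑ i, b.repr α i * ⟪μ, b i⟫_ℝ < ∑ _i : ι, (0:ℝ) := by
      apply Finset.sum_lt_sum
      · intro i _
        have h1 := hposrep α hα i
        have h2 := hμ i
        nlinarith
      · exact ⟨i0, Finset.mem_univ i0, mul_neg_of_pos_of_neg
          (lt_of_le_of_ne (hposrep α hα i0) (Ne.symm hi0)) (hμ i0)⟩
    simpa using this
  -- common denominator
  set N : ℕ := ∏ α ∈ Δpos, (c α).den with hN
  have hNpos : 0 < N := Finset.prod_pos (fun α _ => (c α).pos)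
  set n : E → ℕ := fun α => (c α * N).num.toNat with hn
  have hkey : ∀ α ∈ Δpos, ((n α : ℚ)) = c α * N := by
    intro α hα
    obtain ⟨e, he⟩ := Finset.dvd_prod_of_mem (fun α => (c α).den) hα
    have h1 : (c α) * (N:ℚ) = (((c α).num * e : ℤ) : ℚ) := by
      rw [hN, he]
      push_cast
      rw [← mul_assoc, Rat.mul_den_eq_num]
    rw [hn]
    simp only [h1, Rat.num_intCast]
    have hnn : (0:ℤ) ≤ (c α).num * e :=
      mul_nonneg (Rat.num_nonneg.mpr (hc α)) (Int.ofNat_nonneg e)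
    exact_mod_cast Int.toNat_of_nonneg hnn
  -- the multiset of roots with multiplicities
  set l : Multiset E := ∑ α ∈ Δpos, Multiset.replicate (n α) α with hl
  have hlmem : ∀ x ∈ l, x ∈ Δpos := by
    intro x hx
    rw [hl, Multiset.mem_sum] at hx
    obtain ⟨a, ha, hx⟩ := hx
    rwa [Multiset.eq_of_mem_replicate hx]
  have hlsum : l.sum = ∑ α ∈ Δpos, (n α) • α := by
    rw [hl]
    have hms : (∑ α ∈ Δpos, Multiset.replicate (n α) α).sum
        = ∑ α ∈ Δpos, (Multiset.replicate (n α) α).sum :=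
      map_sum (AddMonoidHom.mk' (Multiset.sum : Multiset E → E) Multiset.sum_add)
        (fun α => Multiset.replicate (n α) α) Δpos
    rw [hms]
    simp [Multiset.sum_replicate]
  obtain ⟨l', hl'mem, hl'sum, hl'pair⟩ :=
    pc_core Δpos (pc_root_add Δ Δpos b hΔ0 hrefl hcrys hposΔ hdecomp hposrep)
      (Multiset.card l) l le_rfl hlmem
  have hNne : ((N:ℝ)) ≠ 0 := by positivity
  -- wμ in terms of l'
  have hwμ' : w μ = -((N:ℝ)⁻¹ • l'.sum) := by
    rw [hl'sum, hlsum, hwμ]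
    congr 1
    rw [Finset.smul_sum]
    apply Finset.sum_congr rfl
    intro α hα
    have hcast : ((n α : ℝ)) = (c α : ℝ) * N := by
      exact_mod_cast congrArg (fun q : ℚ => (q : ℝ)) (hkey α hα)
    rw [← Nat.cast_smul_eq_nsmul ℝ, smul_smul, hcast]
    congr 1
    field_simp
  -- stability of Δ under w
  have hstab := pc_weyl_stab Δ hΔ0 hrefl w hw
  -- package the answer
  refine ⟨l'.toList.length, fun i => l'.toList.get i, fun _ => (N:ℚ)⁻¹, ?_, ?_, ?_, ?_⟩
  · intro i
    have hmemβ : l'.toList.get i ∈ l' := Multiset.mem_toList.mp (l'.toList.get_mem i)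
    have hβpos : l'.toList.get i ∈ Δpos := hl'mem _ hmemβ
    refine ⟨hβpos, ?_⟩
    set γ := l'.toList.get i with hγ
    -- ⟪wμ, γ⟫ < 0
    have hipneg : ⟪w μ, γ⟫_ℝ < 0 := by
      rw [hwμ', inner_neg_left, real_inner_smul_left]
      have hsum_pos : (0:ℝ) < ⟪l'.sum, γ⟫_ℝ := by
        have hcons : l' = γ ::ₘ l'.erase γ := (Multiset.cons_erase hmemβ).symm
        rw [hcons, Multiset.sum_cons, inner_add_left]
        have h1 : (0:ℝ) < ⟪γ, γ⟫_ℝ :=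
          pc_inner_self_pos (fun h => hΔ0 (h ▸ hposΔ hβpos))
        have h2 : (0:ℝ) ≤ ⟪(l'.erase γ).sum, γ⟫_ℝ :=
          pc_multiset_inner_nonneg γ _ (fun x hx =>
            hl'pair x (Multiset.mem_of_mem_erase hx) γ hmemβ)
        linarith
      have : (0:ℝ) < (N:ℝ)⁻¹ := by positivity
      nlinarith
    have hwsγ : w.symm γ ∈ Δ := hstab.2 γ (hposΔ hβpos)
    have hinner : ⟪μ, w.symm γ⟫_ℝ = ⟪w μ, γ⟫_ℝ := by
      conv_rhs => rw [← w.apply_symm_apply γ]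
      rw [w.inner_map_map]
    rcases hdecomp (w.symm γ) hwsγ with h | h
    · exact h.1
    · exfalso
      have := hμneg _ h.1
      rw [inner_neg_right] at this
      rw [hinner] at this
      linarith
  · intro i
    positivity
  · rw [hwμ']
    congr 1
    simp only [Rat.cast_inv, Rat.cast_natCast]
    rw [← Finset.smul_sum]
    congr 1
    rw [← List.sum_ofFn, List.ofFn_get, Multiset.sum_toList]
  · intro i j
    have hmi : l'.toList.get i ∈ l' := Multiset.mem_toList.mp (l'.toList.get_mem i)
    have hmj : l'.toList.get j ∈ l' := Multiset.mem_toList.mp (l'.toList.get_mem j)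
    exact hl'pair _ hmi _ hmj
end

section
/- Let Δ(B₄) = {±ε_i ± ε_j : 1 ≤ i < j ≤ 4} ∪ {±ε_i : 1 ≤ i ≤ 4} ⊂ ℝ⁴ be the root system of type B₄, and let χ = 20ε₁ + 10ε₂ + 9ε₃ + ε₄ (which equals 10π₁ + π₂ + 8π₃ + 2π₄ in terms of the fundamental weights of B₄). Then for every subset S ⊆ Δ(B₄) whose linear span is a proper subspace of ℝ⁴ and contains χ, one has span(S) = span{ε₂ − ε₃, ε₃ − ε₄, ε₁ + ε₄} or span(S) = span{ε₁, ε₂ + ε₄, ε₃ − ε₄}; i.e., the only proper subspaces of ℝ⁴ spanned by roots of B₄ and containing χ are the linear spans of the subsystem Δ₁ of type A₃ with simple roots ε₂ − ε₃, ε₃ − ε₄, ε₁ + ε₄ and of the subsystem Δ₂ of type A₁⊕A₂ with simple roots ε₁, ε₂ + ε₄, ε₃ − ε₄. -/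
-- test basic building blocks
def dot (m v : Fin 4 → ℝ) : ℝ := m 0 * v 0 + m 1 * v 1 + m 2 * v 2 + m 3 * v 3

lemma dot_single (m : Fin 4 → ℝ) (i : Fin 4) : dot m (Pi.single i (1:ℝ)) = m i := by
  fin_cases i <;> simp [dot, Pi.single_apply]

lemma dot_add (m v w : Fin 4 → ℝ) : dot m (v + w) = dot m v + dot m w := by
  simp [dot]; ring

lemma dot_neg (m v : Fin 4 → ℝ) : dot m (-v) = - dot m v := by
  simp [dot]; ring

lemma dot_sub (m v w : Fin 4 → ℝ) : dot m (v - w) = dot m v - dot m w := by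
  simp [dot]; ring

noncomputable def dotL (m : Fin 4 → ℝ) : (Fin 4 → ℝ) →ₗ[ℝ] ℝ where
  toFun := dot m
  map_add' v w := by simp [dot]; ring
  map_smul' c v := by simp [dot]; ring

lemma exists_normal (V : Submodule ℝ (Fin 4 → ℝ)) (x : Fin 4 → ℝ) (hx : x ∉ V) :
    ∃ n : Fin 4 → ℝ, (∀ v ∈ V, dot n v = 0) ∧ dot n x ≠ 0 := by
  obtain ⟨f, hfx, hfV⟩ := V.exists_dual_map_eq_bot_of_notMem hx inferInstance
  have key : ∀ v : Fin 4 → ℝ, dot (fun i => f (Pi.single i 1)) v = f v := by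
    intro v
    have h1 : f v = ∑ i : Fin 4, v i • f (fun j => if i = j then (1:ℝ) else 0) :=
      LinearMap.pi_apply_eq_sum_univ f v
    have h2 : ∀ i : Fin 4, (fun j => if i = j then (1:ℝ) else 0) = Pi.single i 1 := by
      intro i; funext j; simp [Pi.single_apply, eq_comm]
    simp only [h2] at h1
    rw [h1, Fin.sum_univ_four]
    simp [dot, mul_comm]
  refine ⟨fun i => f (Pi.single i 1), ?_, ?_⟩
  · intro v hv
    rw [key]
    have : f v ∈ V.map f := ⟨v, hv, rfl⟩
    rw [hfV] at this
    simpa using this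
  · rw [key]; exact hfx

lemma span_dot_zero {S : Set (Fin 4 → ℝ)} {x m : Fin 4 → ℝ}
    (hx : x ∈ Submodule.span ℝ S) (h : ∀ s ∈ S, dot m s = 0) : dot m x = 0 := by
  have hle : Submodule.span ℝ S ≤ LinearMap.ker (dotL m) :=
    Submodule.span_le.mpr (fun s hs => by simpa [dotL, LinearMap.mem_ker] using h s hs)
  simpa [dotL, LinearMap.mem_ker] using hle hx

noncomputable def sel (v x : ℝ) : ℝ := if x = v then 1 else if x = -v then -1 else 0

lemma sel_self (v : ℝ) : sel v v = 1 := if_pos rfl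

lemma sel_zero {v : ℝ} (hv : v ≠ 0) : sel v 0 = 0 := by
  unfold sel
  rw [if_neg (fun h => hv h.symm), if_neg (fun h => hv (by linarith [h] : v = 0))]

lemma sel_odd {v : ℝ} (hv : v ≠ 0) (x : ℝ) : sel v (-x) = - sel v x := by
  unfold sel
  by_cases h1 : x = v
  · subst h1
    rw [if_neg (by intro h; apply hv; linarith), if_pos rfl, if_pos rfl]
    try norm_num
  · by_cases h2 : x = -v
    · subst h2
      rw [if_pos (by ring), if_neg h1, if_pos rfl]
      norm_num
    · rw [if_neg (by intro h; exact h2 (by linarith)),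
        if_neg (by intro h; exact h1 (by linarith)), if_neg h1, if_neg h2]
      norm_num

lemma sel_cases (v x : ℝ) : (x = v ∧ sel v x = 1) ∨ (x = -v ∧ sel v x = -1) ∨ sel v x = 0 := by
  unfold sel
  by_cases h1 : x = v
  · exact Or.inl ⟨h1, if_pos h1⟩
  · by_cases h2 : x = -v
    · exact Or.inr (Or.inl ⟨h2, by rw [if_neg h1, if_pos h2]⟩)
    · exact Or.inr (Or.inr (by rw [if_neg h1, if_neg h2]))

lemma crux (S : Set (Fin 4 → ℝ))
    (hroot : ∀ s ∈ S,
      (∃ i j : Fin 4, s = Pi.single i 1 + Pi.single j 1 ∨ s = Pi.single i 1 - Pi.single j 1 ∨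
        s = -Pi.single i 1 + Pi.single j 1 ∨ s = -Pi.single i 1 - Pi.single j 1) ∨
      (∃ i : Fin 4, s = Pi.single i 1 ∨ s = -Pi.single i 1))
    (hw : ∀ m : Fin 4 → ℝ, (∀ s ∈ S, dot m s = 0) → 20 * m 0 + 10 * m 1 + 9 * m 2 + m 3 = 0)
    (n : Fin 4 → ℝ) (hn : ∀ s ∈ S, dot n s = 0)
    (hn0 : ¬ (n 0 = 0 ∧ n 1 = 0 ∧ n 2 = 0 ∧ n 3 = 0)) :
    (n 1 = -n 0 ∧ n 2 = -n 0 ∧ n 3 = -n 0 ∧ n 0 ≠ 0) ∨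
    (n 0 = 0 ∧ n 2 = -n 1 ∧ n 3 = -n 1 ∧ n 1 ≠ 0) := by
  have trans : ∀ g : ℝ → ℝ, (∀ x, g (-x) = - g x) →
      ∀ s ∈ S, dot (fun i => g (n i)) s = 0 := by
    intro g hg s hs
    have g0 : g 0 = 0 := by have := hg 0; rw [neg_zero] at this; linarith
    have hns := hn s hs
    rcases hroot s hs with ⟨i, j, h | h | h | h⟩ | ⟨i, h | h⟩ <;> subst h <;>
        simp only [dot_add, dot_sub, dot_neg, dot_single] at hns ⊢
    · rw [show n i = -(n j) by linarith, hg]; ring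
    · rw [show n i = n j by linarith]; ring
    · rw [show n j = n i by linarith]; ring
    · rw [show n i = -(n j) by linarith, hg]; ring
    · rw [hns, g0]
    · rw [show n i = 0 by linarith, g0]; ring
  have key : ∀ v : ℝ, v ≠ 0 →
      20 * sel v (n 0) + 10 * sel v (n 1) + 9 * sel v (n 2) + sel v (n 3) = 0 := by
    intro v hv
    exact hw (fun i => sel v (n i)) (trans (sel v) (sel_odd hv))
  by_cases h0 : n 0 = 0
  · by_cases h1 : n 1 = 0
    · by_cases h2 : n 2 = 0
      · have h3 : n 3 ≠ 0 := fun h => hn0 ⟨h0, h1, h2, h⟩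
        have H := key (n 3) h3
        rw [h0, h1, h2, sel_zero h3, sel_self] at H
        norm_num at H
      · have H := key (n 2) h2
        rw [h0, h1, sel_zero h2, sel_self] at H
        rcases sel_cases (n 2) (n 3) with ⟨hd, ed⟩ | ⟨hd, ed⟩ | ed <;> rw [ed] at H <;>
          norm_num at H
    · have H := key (n 1) h1
      rw [h0, sel_zero h1, sel_self] at H
      rcases sel_cases (n 1) (n 2) with ⟨hc, ec⟩ | ⟨hc, ec⟩ | ec <;>
        rcases sel_cases (n 1) (n 3) with ⟨hd, ed⟩ | ⟨hd, ed⟩ | ed <;>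
        rw [ec, ed] at H <;>
        first
          | (exfalso; revert H; norm_num; done)
          | exact Or.inr ⟨h0, hc, hd, h1⟩
  · have H := key (n 0) h0
    rw [sel_self] at H
    rcases sel_cases (n 0) (n 1) with ⟨hb, eb⟩ | ⟨hb, eb⟩ | eb <;>
      rcases sel_cases (n 0) (n 2) with ⟨hc, ec⟩ | ⟨hc, ec⟩ | ec <;>
      rcases sel_cases (n 0) (n 3) with ⟨hd, ed⟩ | ⟨hd, ed⟩ | ed <;>
      rw [eb, ec, ed] at H <;>
      first
        | (exfalso; revert H; norm_num; done)
        | exact Or.inl ⟨hb, hc, hd, h0⟩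

lemma mem_W1 (v : Fin 4 → ℝ) (hv : v 0 - v 1 - v 2 - v 3 = 0) :
    v ∈ Submodule.span ℝ ({Pi.single 1 1 - Pi.single 2 1, Pi.single 2 1 - Pi.single 3 1,
      Pi.single 0 1 + Pi.single 3 1} : Set (Fin 4 → ℝ)) := by
  have hv' : v = v 1 • ((Pi.single 1 1 : Fin 4 → ℝ) - Pi.single 2 1) +
      ((v 1 + v 2) • ((Pi.single 2 1 : Fin 4 → ℝ) - Pi.single 3 1) +
        v 0 • ((Pi.single 0 1 : Fin 4 → ℝ) + Pi.single 3 1)) := by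
    funext k
    fin_cases k <;>
      simp (config := { decide := true }) [Pi.single_apply, Fin.ext_iff] <;> linarith
  rw [hv']
  refine add_mem (Submodule.smul_mem _ _ (Submodule.subset_span (by simp)))
    (add_mem (Submodule.smul_mem _ _ (Submodule.subset_span (by simp)))
      (Submodule.smul_mem _ _ (Submodule.subset_span (by simp))))

lemma mem_W2 (v : Fin 4 → ℝ) (hv : v 1 - v 2 - v 3 = 0) :
    v ∈ Submodule.span ℝ ({Pi.single 0 1, Pi.single 1 1 + Pi.single 3 1,
      Pi.single 2 1 - Pi.single 3 1} : Set (Fin 4 → ℝ)) := by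
  have hv' : v = v 0 • (Pi.single 0 1 : Fin 4 → ℝ) +
      (v 1 • ((Pi.single 1 1 : Fin 4 → ℝ) + Pi.single 3 1) +
       v 2 • ((Pi.single 2 1 : Fin 4 → ℝ) - Pi.single 3 1)) := by
    funext k
    fin_cases k <;>
      simp (config := { decide := true }) [Pi.single_apply, Fin.ext_iff] <;> linarith
  rw [hv']
  refine add_mem (Submodule.smul_mem _ _ (Submodule.subset_span (by simp)))
    (add_mem (Submodule.smul_mem _ _ (Submodule.subset_span (by simp)))
      (Submodule.smul_mem _ _ (Submodule.subset_span (by simp))))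

lemma root_coord0 (s : Fin 4 → ℝ)
    (hroot : (∃ i j : Fin 4, s = Pi.single i 1 + Pi.single j 1 ∨ s = Pi.single i 1 - Pi.single j 1 ∨
        s = -Pi.single i 1 + Pi.single j 1 ∨ s = -Pi.single i 1 - Pi.single j 1) ∨
      (∃ i : Fin 4, s = Pi.single i 1 ∨ s = -Pi.single i 1))
    (h1 : s 0 - s 1 - s 2 - s 3 = 0) (h2 : s 1 - s 2 - s 3 = 0) : s 0 = 0 := by
  rcases hroot with ⟨i, j, h⟩ | ⟨i, h⟩
  · rcases h with h | h | h | h <;> subst h <;> fin_cases i <;> fin_cases j <;>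
      simp (config := { decide := true }) [Pi.single_apply, Fin.ext_iff] at h1 h2 ⊢ <;>
      linarith
  · rcases h with h | h <;> subst h <;> fin_cases i <;>
      simp (config := { decide := true }) [Pi.single_apply, Fin.ext_iff] at h1 h2 ⊢ <;>
      linarith


/-- Example 3.4 of the paper.  Let `Δ(B₄)` be the root system of
type `B₄` in `ℝ⁴` and `χ = 20ε₁ + 10ε₂ + 9ε₃ + ε₄` (`= 10π₁ + π₂ + 8π₃ + 2π₄`).
Every proper subspace of `ℝ⁴` spanned by a set of roots of `B₄` and containing `χ`
equals `span{ε₂-ε₃, ε₃-ε₄, ε₁+ε₄}` (span of the subsystem `Δ₁` of type `A₃`) or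
`span{ε₁, ε₂+ε₄, ε₃-ε₄}` (span of the subsystem `Δ₂` of type `A₁⊕A₂`).
(Indices shifted: `εᵢ = ε (i-1)`.) -/
theorem proper_root_subspaces_containing_chi_B4
    (ε : Fin 4 → (Fin 4 → ℝ)) (hε : ε = fun i => Pi.single i 1)
    (Δ : Set (Fin 4 → ℝ))
    (hΔ : Δ = {v | ∃ i j : Fin 4, i < j ∧
          (v = ε i + ε j ∨ v = ε i - ε j ∨ v = -ε i + ε j ∨ v = -ε i - ε j)} ∪
        {v | ∃ i : Fin 4, v = ε i ∨ v = -ε i})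
    (χ : Fin 4 → ℝ)
    (hχ : χ = (20 : ℝ) • ε 0 + (10 : ℝ) • ε 1 + (9 : ℝ) • ε 2 + ε 3) :
    ∀ S : Set (Fin 4 → ℝ), S ⊆ Δ → Submodule.span ℝ S ≠ ⊤ →
      χ ∈ Submodule.span ℝ S →
        Submodule.span ℝ S =
            Submodule.span ℝ ({ε 1 - ε 2, ε 2 - ε 3, ε 0 + ε 3} : Set (Fin 4 → ℝ)) ∨
        Submodule.span ℝ S =
            Submodule.span ℝ ({ε 0, ε 1 + ε 3, ε 2 - ε 3} : Set (Fin 4 → ℝ)) := by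
  intro S hSΔ htop hmem
  have hε' : ∀ i, ε i = Pi.single i (1:ℝ) := fun i => by rw [hε]
  -- every element of S is a root (in Pi.single form)
  have hroot : ∀ s ∈ S,
      (∃ i j : Fin 4, s = Pi.single i 1 + Pi.single j 1 ∨ s = Pi.single i 1 - Pi.single j 1 ∨
        s = -Pi.single i 1 + Pi.single j 1 ∨ s = -Pi.single i 1 - Pi.single j 1) ∨
      (∃ i : Fin 4, s = Pi.single i 1 ∨ s = -Pi.single i 1) := by
    intro s hs
    have h := hSΔ hs
    rw [hΔ] at h
    rcases h with ⟨i, j, _, h⟩ | ⟨i, h⟩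
    · simp only [hε'] at h
      exact Or.inl ⟨i, j, h⟩
    · simp only [hε'] at h
      exact Or.inr ⟨i, h⟩
  -- the workhorse: any functional vanishing on S satisfies the χ-relation
  have hw : ∀ m : Fin 4 → ℝ, (∀ s ∈ S, dot m s = 0) →
      20 * m 0 + 10 * m 1 + 9 * m 2 + m 3 = 0 := by
    intro m h
    have hd := span_dot_zero hmem h
    rw [hχ] at hd
    simp only [hε'] at hd
    simp (config := { decide := true }) [dot, Pi.single_apply, Fin.ext_iff] at hd
    linarith
  -- if both linear relations hold on S, contradiction
  have bothFalse : (∀ s ∈ S, s 0 - s 1 - s 2 - s 3 = 0) →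
      (∀ s ∈ S, s 1 - s 2 - s 3 = 0) → False := by
    intro hA hB
    have h0 : ∀ s ∈ S, s 0 = 0 := fun s hs => root_coord0 s (hroot s hs) (hA s hs) (hB s hs)
    have h20 := hw (Pi.single 0 1) ?_
    · simp (config := { decide := true }) [Pi.single_apply, Fin.ext_iff] at h20
    · intro s hs
      have := h0 s hs
      simp (config := { decide := true }) [dot, Pi.single_apply, Fin.ext_iff, this]
  have line1S : ∀ m : Fin 4 → ℝ, (∀ s ∈ S, dot m s = 0) →
      m 1 = -m 0 → m 2 = -m 0 → m 3 = -m 0 → m 0 ≠ 0 →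
      ∀ s ∈ S, s 0 - s 1 - s 2 - s 3 = 0 := by
    intro m hm e1 e2 e3 h0 s hs
    have hds := hm s hs
    simp only [dot] at hds
    rw [e1, e2, e3] at hds
    have h2 : m 0 * (s 0 - s 1 - s 2 - s 3) = 0 := by linear_combination hds
    exact (mul_eq_zero.mp h2).resolve_left h0
  have line2S : ∀ m : Fin 4 → ℝ, (∀ s ∈ S, dot m s = 0) →
      m 0 = 0 → m 2 = -m 1 → m 3 = -m 1 → m 1 ≠ 0 →
      ∀ s ∈ S, s 1 - s 2 - s 3 = 0 := by
    intro m hm e0 e2 e3 h1 s hs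
    have hds := hm s hs
    simp only [dot] at hds
    rw [e0, e2, e3] at hds
    have h2 : m 1 * (s 1 - s 2 - s 3) = 0 := by linear_combination hds
    exact (mul_eq_zero.mp h2).resolve_left h1
  -- a nonzero normal to span S
  obtain ⟨x, hx⟩ : ∃ x, x ∉ Submodule.span ℝ S := by
    by_contra h; push_neg at h; exact htop (Submodule.eq_top_iff'.mpr h)
  obtain ⟨n, hnV, hnx⟩ := exists_normal _ x hx
  have hnS : ∀ s ∈ S, dot n s = 0 := fun s hs => hnV s (Submodule.subset_span hs)
  have hn0 : ¬(n 0 = 0 ∧ n 1 = 0 ∧ n 2 = 0 ∧ n 3 = 0) := by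
    rintro ⟨a, b, c, d⟩; exact hnx (by simp [dot, a, b, c, d])
  simp only [hε']
  rcases crux S hroot hw n hnS hn0 with ⟨e1, e2, e3, h0⟩ | ⟨e0, e2, e3, h1⟩
  · -- span S = W1
    have hf1 := line1S n hnS e1 e2 e3 h0
    left
    refine le_antisymm (Submodule.span_le.mpr fun s hs => mem_W1 s (hf1 s hs))
      (Submodule.span_le.mpr ?_)
    intro g hg
    show g ∈ Submodule.span ℝ S
    by_contra hgn
    obtain ⟨m, hmV, hmg⟩ := exists_normal _ g hgn
    have hmS : ∀ s ∈ S, dot m s = 0 := fun s hs => hmV s (Submodule.subset_span hs)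
    have hm0 : ¬(m 0 = 0 ∧ m 1 = 0 ∧ m 2 = 0 ∧ m 3 = 0) := by
      rintro ⟨a, b, c, d⟩; exact hmg (by simp [dot, a, b, c, d])
    rcases crux S hroot hw m hmS hm0 with ⟨f1, f2, f3, g0⟩ | ⟨f0, f2, f3, g1⟩
    · apply hmg
      simp only [Set.mem_insert_iff, Set.mem_singleton_iff] at hg
      rcases hg with rfl | rfl | rfl
      · rw [dot_sub, dot_single, dot_single, f1, f2]; ring
      · rw [dot_sub, dot_single, dot_single, f2, f3]; ring
      · rw [dot_add, dot_single, dot_single, f3]; ring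
    · exact absurd (bothFalse hf1 (line2S m hmS f0 f2 f3 g1)) id
  · -- span S = W2
    have hf2 := line2S n hnS e0 e2 e3 h1
    right
    refine le_antisymm (Submodule.span_le.mpr fun s hs => mem_W2 s (hf2 s hs))
      (Submodule.span_le.mpr ?_)
    intro g hg
    show g ∈ Submodule.span ℝ S
    by_contra hgn
    obtain ⟨m, hmV, hmg⟩ := exists_normal _ g hgn
    have hmS : ∀ s ∈ S, dot m s = 0 := fun s hs => hmV s (Submodule.subset_span hs)
    have hm0 : ¬(m 0 = 0 ∧ m 1 = 0 ∧ m 2 = 0 ∧ m 3 = 0) := by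
      rintro ⟨a, b, c, d⟩; exact hmg (by simp [dot, a, b, c, d])
    rcases crux S hroot hw m hmS hm0 with ⟨f1, f2, f3, g0⟩ | ⟨f0, f2, f3, g1⟩
    · exact absurd (bothFalse (line1S m hmS f1 f2 f3 g0) hf2) id
    · apply hmg
      simp only [Set.mem_insert_iff, Set.mem_singleton_iff] at hg
      rcases hg with rfl | rfl | rfl
      · rw [dot_single, f0]
      · rw [dot_add, dot_single, dot_single, f3]; ring
      · rw [dot_sub, dot_single, dot_single, f2, f3]; ring
end
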